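/- arXiv:1605.04203 — 9 statements merged into one kernel-verified Lean document; each statement's English description precedes it below -/
import Mathlib

section
/- Let J ⊆ ℂ[x_0,…,x_n] be a homogeneous ideal, let ℓ ∈ ℂ[x_0,…,x_n] be homogeneous of degree 1, and let w ∈ ℝ^{n+1}. If the initial form In_w(ℓ) is not a zero-divisor in the quotient ring ℂ[x_0,…,x_n]/In_w(J), then In_w(J + ⟨ℓ − 1⟩) = In_w(J) + In_w(⟨ℓ − 1⟩), where ⟨ℓ − 1⟩ denotes the principal ideal generated by ℓ − 1. -/
/-!
Every element of `J + ⟨u⟩`, `u = ℓ - 1`, is `g + f u` with `g ∈ J`. Initial forms are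
multiplicative, and the initial form of a sum is that of one summand or the sum of the two, unless
the two leading parts cancel. If `In(g) + In(f) In(u) = 0` then `In(u) In(f) ∈ In(J)`; as `In(u)`
is `In(ℓ)`, `-1` or `In(ℓ) - 1`, and `In(J)` is homogeneous, this forces `In(f) ∈ In(J)`. Then
`In(f) = In(g₁)` for some `g₁ ∈ J` of no larger degree, and `g + f u = (g + g₁ u) + (f - g₁) u`
with `f - g₁` of smaller top weight. Polynomials of bounded degree carry only finitely many
weights, so this descent terminates.
-/

open MvPolynomial
open scoped Classical

noncomputable section

/-- The weight `w · α` of an exponent vector `α`. -/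
def wdeg {n : ℕ} (w : Fin n → ℝ) (α : Fin n →₀ ℕ) : ℝ := ∑ i, w i * (α i : ℝ)

/-- The initial form `In_w(f)` of a polynomial: the sum of the terms of `f` whose
`w`-weight is maximal over the support of `f` (and `In_w(0) = 0`). -/
def initialForm {R : Type*} [CommSemiring R] {n : ℕ} (w : Fin n → ℝ)
    (f : MvPolynomial (Fin n) R) : MvPolynomial (Fin n) R :=
  ∑ α ∈ f.support.filter (fun α => ∀ β ∈ f.support, wdeg w β ≤ wdeg w α),
    monomial α (coeff α f)

/-- The initial ideal `In_w(I)`: the ideal generated by the initial forms of elements of `I`. -/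
def initialIdeal {R : Type*} [CommRing R] {n : ℕ} (w : Fin n → ℝ)
    (I : Ideal (MvPolynomial (Fin n) R)) : Ideal (MvPolynomial (Fin n) R) :=
  Ideal.span {g | ∃ f ∈ I, g = initialForm w f}

open Finsupp (weight)
open scoped Finset

lemma wdeg_eq_weight {n : ℕ} (w : Fin n → ℝ) : wdeg w = weight w := by
  ext α
  simp [wdeg, Finsupp.weight_apply, Finsupp.sum_fintype, mul_comm]

namespace MvPolynomial

section CommSemiring

variable {σ R : Type*} [CommSemiring R] {w : σ → ℝ} {a b c : ℝ} {f p : MvPolynomial σ R}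

variable (R) in
def belowWeight (w : σ → ℝ) (c : ℝ) : Submodule R (MvPolynomial σ R) :=
  restrictSupport R {α | weight w α < c}

lemma mem_belowWeight : f ∈ belowWeight R w c ↔ ∀ α ∈ f.support, weight w α < c :=
  Iff.rfl

lemma belowWeight_mono (h : a ≤ b) : belowWeight R w a ≤ belowWeight R w b :=
  restrictSupport_mono R fun _ hα => lt_of_lt_of_le hα h

lemma IsWeightedHomogeneous.mem_belowWeight_of_lt (hp : p.IsWeightedHomogeneous w a) (h : a < c) :
    p ∈ belowWeight R w c :=
  mem_belowWeight.mpr fun _ hα => (hp (mem_support_iff.mp hα)).trans_lt h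

lemma mul_mem_belowWeight {q : MvPolynomial σ R} (hp : p ∈ belowWeight R w a)
    (hq : ∀ α ∈ q.support, weight w α ≤ b) : p * q ∈ belowWeight R w (a + b) := by
  refine mem_belowWeight.mpr fun α hα => ?_
  obtain ⟨β, hβ, γ, hγ, rfl⟩ := Finset.mem_add.mp (support_mul p q hα)
  rw [map_add]
  exact add_lt_add_of_lt_of_le (mem_belowWeight.mp hp β hβ) (hq γ hγ)

lemma homogeneousComponent_mem_belowWeight (hf : f ∈ belowWeight R w c) (d : ℕ) :
    homogeneousComponent d f ∈ belowWeight R w c := by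
  refine mem_belowWeight.mpr fun α hα => mem_belowWeight.mp hf α ?_
  rw [support_homogeneousComponent] at hα
  exact (Finset.mem_filter.mp hα).1

lemma IsWeightedHomogeneous.homogeneousComponent (hp : p.IsWeightedHomogeneous w c) (d : ℕ) :
    (homogeneousComponent d p).IsWeightedHomogeneous w c := by
  intro α hα
  rw [coeff_homogeneousComponent] at hα
  split_ifs at hα
  exacts [hp hα, absurd rfl hα]

lemma weightedHomogeneousComponent_monomial_mul (β : σ →₀ ℕ) (r : R) :
    weightedHomogeneousComponent w c (monomial β r * f) =
      monomial β r * weightedHomogeneousComponent w (c - weight w β) f := by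
  ext γ
  rw [coeff_monomial_mul', coeff_weightedHomogeneousComponent, coeff_monomial_mul']
  by_cases hβγ : β ≤ γ
  · obtain ⟨δ, rfl⟩ := exists_add_of_le hβγ
    simp only [le_add_iff_nonneg_right, zero_le, if_true, add_tsub_cancel_left, map_add,
      coeff_weightedHomogeneousComponent, ← eq_sub_iff_add_eq']
    split_ifs <;> simp
  · simp [hβγ]

lemma card_filter_weight_le_lt {E : Finset (σ →₀ ℕ)} {f' : MvPolynomial σ R}
    (hf' : f' ∈ belowWeight R w c) {α : σ →₀ ℕ} (hαE : α ∈ E) (hαf : α ∈ f.support)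
    (hαc : weight w α = c) :
    #{β ∈ E | (weight w β : WithBot ℝ) ≤ weightedTotalDegree' w f'} <
      #{β ∈ E | (weight w β : WithBot ℝ) ≤ weightedTotalDegree' w f} := by
  have hlt : weightedTotalDegree' w f' < c := (Finset.sup_lt_iff (WithBot.bot_lt_coe c)).mpr
    fun β hβ => WithBot.coe_lt_coe.mpr (mem_belowWeight.mp hf' β hβ)
  have hle : (c : WithBot ℝ) ≤ weightedTotalDegree' w f :=
    hαc ▸ Finset.le_sup (f := fun β => (weight w β : WithBot ℝ)) hαf
  refine Finset.card_lt_card ⟨fun β hβ => ?_, fun hsub => ?_⟩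
  · rw [Finset.mem_filter] at hβ ⊢
    exact ⟨hβ.1, hβ.2.trans (hlt.le.trans hle)⟩
  · have := (Finset.mem_filter.mp (hsub (Finset.mem_filter.mpr ⟨hαE, hαc ▸ hle⟩))).2
    exact (hαc ▸ this).not_gt hlt

end CommSemiring

section CommRing

variable {σ R : Type*} [CommRing R] {w : σ → ℝ} {c : ℝ} {f p : MvPolynomial σ R}

lemma coeff_eq_of_sub_mem_belowWeight (hfp : f - p ∈ belowWeight R w c) {α : σ →₀ ℕ}
    (hα : weight w α = c) : coeff α f = coeff α p := by
  by_contra hne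
  have := mem_belowWeight.mp hfp α (by simpa [sub_eq_zero] using hne)
  exact this.ne hα

lemma weight_le_of_sub_mem_belowWeight (hp : p.IsWeightedHomogeneous w c)
    (hfp : f - p ∈ belowWeight R w c) : ∀ α ∈ f.support, weight w α ≤ c := by
  intro α hα
  by_cases hpα : coeff α p = 0
  · refine (mem_belowWeight.mp hfp α ?_).le
    simpa [hpα] using hα
  · exact (hp hpα).le

lemma mem_of_sub_one_mul_mem {I : Ideal (MvPolynomial σ R)}
    (hI : ∀ f ∈ I, ∀ d : ℕ, homogeneousComponent d f ∈ I) {a z : MvPolynomial σ R} {k : ℕ}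
    (ha : a.IsHomogeneous k) (hk : 0 < k) (hz : (a - 1) * z ∈ I) : z ∈ I := by
  rw [← sum_homogeneousComponent z]
  refine sum_mem fun d _ => ?_
  -- `z ≡ a ^ (d + 1) * z` modulo `I`, and the right side has no component of degree `d`.
  have hpow : (a ^ (d + 1) - 1) * z ∈ I := by
    obtain ⟨b, hb⟩ := one_pow (M := MvPolynomial σ R) (d + 1) ▸ sub_dvd_pow_sub_pow a 1 (d + 1)
    rw [hb, mul_right_comm]
    exact I.mul_mem_right b hz
  have hzero : homogeneousComponent d (a ^ (d + 1) * z) = 0 := by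
    conv_lhs => rw [← sum_homogeneousComponent z, Finset.mul_sum, map_sum]
    refine Finset.sum_eq_zero fun e _ => ?_
    rw [homogeneousComponent_of_mem ((ha.pow (d + 1)).mul (homogeneousComponent_isHomogeneous e z)),
      if_neg]
    nlinarith
  simpa [sub_mul, hzero] using hI _ hpow d

end CommRing

end MvPolynomial

lemma mem_of_mul_mem_of_mk_mem_nonZeroDivisors {A : Type*} [CommRing A] {I : Ideal A} {a z : A}
    (ha : Ideal.Quotient.mk I a ∈ nonZeroDivisors (A ⧸ I)) (h : a * z ∈ I) : z ∈ I := by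
  rw [← Ideal.Quotient.eq_zero_iff_mem] at h ⊢
  exact (mem_nonZeroDivisors_iff.mp ha).1 _ (by rwa [← map_mul])

section InitialForm

variable {n : ℕ} {R : Type*} [CommRing R] {w : Fin n → ℝ} {f g p : MvPolynomial (Fin n) R} {c : ℝ}

lemma coeff_initialForm (β : Fin n →₀ ℕ) :
    coeff β (initialForm w f) =
      if ∀ γ ∈ f.support, weight w γ ≤ weight w β then coeff β f else 0 := by
  rw [initialForm, coeff_sum]
  simp only [coeff_monomial, Finset.sum_ite_eq', Finset.mem_filter, wdeg_eq_weight]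
  by_cases hβ : β ∈ f.support
  · simp [hβ]
  · simp [notMem_support_iff.mp hβ]

@[simp] lemma initialForm_zero : initialForm w (0 : MvPolynomial (Fin n) R) = 0 := by
  simp [initialForm]

lemma support_initialForm_subset : (initialForm w f).support ⊆ f.support := by
  intro β hβ
  rw [mem_support_iff, coeff_initialForm] at hβ
  split_ifs at hβ
  exacts [mem_support_iff.mpr hβ, absurd rfl hβ]

lemma initialForm_eq_of_sub_mem_belowWeight (hp : p.IsWeightedHomogeneous w c) (hp0 : p ≠ 0)
    (hfp : f - p ∈ belowWeight R w c) : initialForm w f = p := by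
  obtain ⟨α₀, hα₀⟩ := ne_zero_iff.mp hp0
  have hα₀f : α₀ ∈ f.support := by
    rwa [mem_support_iff, coeff_eq_of_sub_mem_belowWeight hfp (hp hα₀)]
  have hle := weight_le_of_sub_mem_belowWeight hp hfp
  ext β
  rw [coeff_initialForm]
  split_ifs with hmax
  · by_cases hβ : weight w β = c
    · exact coeff_eq_of_sub_mem_belowWeight hfp hβ
    · rw [hp.coeff_eq_zero β hβ, ← notMem_support_iff]
      exact fun hβf => hβ (le_antisymm (hle β hβf) (hp hα₀ ▸ hmax α₀ hα₀f))
  · by_contra hβ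
    have hβc := hp (Ne.symm hβ)
    exact hmax fun γ hγ => hβc ▸ hle γ hγ

lemma exists_initialForm_isWeightedHomogeneous (hf : f ≠ 0) :
    ∃ c, (initialForm w f).IsWeightedHomogeneous w c ∧ initialForm w f ≠ 0 ∧
      f - initialForm w f ∈ belowWeight R w c := by
  obtain ⟨α, hα, hmax⟩ := f.support.exists_max_image (weight w) (support_nonempty.mpr hf)
  set p := weightedHomogeneousComponent w (weight w α) f
  have hp := weightedHomogeneousComponent_isWeightedHomogeneous (w := w) (weight w α) f
  have hp0 : p ≠ 0 := ne_zero_iff.mpr ⟨α, by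
    rwa [coeff_weightedHomogeneousComponent, if_pos rfl, ← mem_support_iff]⟩
  have hfp : f - p ∈ belowWeight R w (weight w α) := by
    refine mem_belowWeight.mpr fun β hβ => (hmax β ?_).lt_of_ne fun hβα => ?_
    · exact Finset.mem_of_subset (support_sub _ f p) hβ |> Finset.mem_union.mp |>.resolve_right
        fun hβp => by simp_all [p, coeff_weightedHomogeneousComponent]
    · simp [p, coeff_weightedHomogeneousComponent, hβα] at hβ
  rw [initialForm_eq_of_sub_mem_belowWeight hp hp0 hfp]
  exact ⟨_, hp, hp0, hfp⟩

lemma sub_initialForm_mem_belowWeight (hc : (initialForm w f).IsWeightedHomogeneous w c)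
    (h0 : initialForm w f ≠ 0) : f - initialForm w f ∈ belowWeight R w c := by
  obtain ⟨c', hc', -, hfc'⟩ :=
    exists_initialForm_isWeightedHomogeneous (w := w) (f := f) fun hf => h0 (by simp [hf])
  rwa [IsWeightedHomogeneous.inj_right h0 hc hc']

lemma initialForm_C (r : R) : initialForm w (C r : MvPolynomial (Fin n) R) = C r := by
  rcases eq_or_ne r 0 with rfl | hr
  · simp
  · exact initialForm_eq_of_sub_mem_belowWeight (isWeightedHomogeneous_C w r)
      (C_ne_zero.mpr hr) (by simp)

lemma initialForm_add_eq_or :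
    initialForm w (f + g) = initialForm w f ∨ initialForm w (f + g) = initialForm w g ∨
      initialForm w (f + g) = initialForm w f + initialForm w g ∨
      initialForm w f + initialForm w g = 0 := by
  rcases eq_or_ne f 0 with rfl | hf
  · simp
  rcases eq_or_ne g 0 with rfl | hg
  · simp
  obtain ⟨a, hpa, hp0, hfp⟩ := exists_initialForm_isWeightedHomogeneous (w := w) hf
  obtain ⟨b, hqb, hq0, hgq⟩ := exists_initialForm_isWeightedHomogeneous (w := w) hg
  set p := initialForm w f
  set q := initialForm w g
  rcases lt_trichotomy b a with hba | rfl | hab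
  · refine Or.inl (initialForm_eq_of_sub_mem_belowWeight hpa hp0 ?_)
    rw [show f + g - p = (f - p) + (g - q) + q by ring]
    exact add_mem (add_mem hfp (belowWeight_mono hba.le hgq)) (hqb.mem_belowWeight_of_lt hba)
  · by_cases hpq : p + q = 0
    · exact Or.inr (Or.inr (Or.inr hpq))
    refine Or.inr (Or.inr (Or.inl (initialForm_eq_of_sub_mem_belowWeight (hpa.add hqb) hpq ?_)))
    rw [show f + g - (p + q) = (f - p) + (g - q) by ring]
    exact add_mem hfp hgq
  · refine Or.inr (Or.inl (initialForm_eq_of_sub_mem_belowWeight hqb hq0 ?_))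
    rw [show f + g - q = (f - p) + (g - q) + p by ring]
    exact add_mem (add_mem (belowWeight_mono hab.le hfp) hgq) (hpa.mem_belowWeight_of_lt hab)

lemma initialForm_mul [IsDomain R] :
    initialForm w (f * g) = initialForm w f * initialForm w g := by
  rcases eq_or_ne f 0 with rfl | hf
  · simp
  rcases eq_or_ne g 0 with rfl | hg
  · simp
  obtain ⟨a, hpa, hp0, hfp⟩ := exists_initialForm_isWeightedHomogeneous (w := w) hf
  obtain ⟨b, hqb, hq0, hgq⟩ := exists_initialForm_isWeightedHomogeneous (w := w) hg
  set p := initialForm w f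
  set q := initialForm w g
  refine initialForm_eq_of_sub_mem_belowWeight (hpa.mul hqb) (mul_ne_zero hp0 hq0) ?_
  rw [show f * g - p * q = (f - p) * g + (g - q) * p by ring]
  refine add_mem (mul_mem_belowWeight hfp (weight_le_of_sub_mem_belowWeight hqb hgq)) ?_
  rw [add_comm a b]
  exact mul_mem_belowWeight hgq fun α hα => (hpa (mem_support_iff.mp hα)).le

lemma initialForm_mem_initialIdeal {I : Ideal (MvPolynomial (Fin n) R)} (hf : f ∈ I) :
    initialForm w f ∈ initialIdeal w I :=
  Ideal.subset_span ⟨f, hf, rfl⟩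

lemma initialIdeal_mono {I I' : Ideal (MvPolynomial (Fin n) R)} (h : I ≤ I') :
    initialIdeal w I ≤ initialIdeal w I' :=
  Ideal.span_mono fun _ ⟨f, hf, hg⟩ => ⟨f, h hf, hg⟩

lemma exists_sub_weightedHomogeneousComponent_mem_belowWeight
    {I : Ideal (MvPolynomial (Fin n) R)} (hp : p ∈ initialIdeal w I) (c : ℝ) :
    ∃ g ∈ I, g - weightedHomogeneousComponent w c p ∈ belowWeight R w c := by
  induction hp using Submodule.span_induction generalizing c with
  | mem x hx =>
    obtain ⟨f, hf, rfl⟩ := hx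
    rcases eq_or_ne f 0 with rfl | hf0
    · exact ⟨0, I.zero_mem, by simp⟩
    obtain ⟨b, hb, -, hfb⟩ := exists_initialForm_isWeightedHomogeneous (w := w) hf0
    by_cases hcb : c = b
    · exact ⟨f, hf, by rwa [hcb, hb.weightedHomogeneousComponent_same]⟩
    · exact ⟨0, I.zero_mem, by simp [hb.weightedHomogeneousComponent_ne c hcb]⟩
  | zero => exact ⟨0, I.zero_mem, by simp⟩
  | add x y _ _ hx hy =>
    obtain ⟨g₁, hg₁, h₁⟩ := hx c
    obtain ⟨g₂, hg₂, h₂⟩ := hy c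
    refine ⟨g₁ + g₂, I.add_mem hg₁ hg₂, ?_⟩
    rw [map_add, add_sub_add_comm]
    exact add_mem h₁ h₂
  | smul a x _ hx =>
    induction a using MvPolynomial.induction_on' generalizing c with
    | monomial β r =>
      obtain ⟨g, hg, hgx⟩ := hx (c - weight w β)
      refine ⟨monomial β r * g, I.mul_mem_left _ hg, ?_⟩
      rw [smul_eq_mul, weightedHomogeneousComponent_monomial_mul, ← mul_sub, mul_comm]
      simpa using mul_mem_belowWeight (b := weight w β) hgx fun α hα => by
        rw [Finset.mem_singleton.mp (support_monomial_subset hα)]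
    | add a₁ a₂ h₁ h₂ =>
      obtain ⟨g₁, hg₁, h₁⟩ := h₁ c
      obtain ⟨g₂, hg₂, h₂⟩ := h₂ c
      refine ⟨g₁ + g₂, I.add_mem hg₁ hg₂, ?_⟩
      rw [add_smul, map_add, add_sub_add_comm]
      exact add_mem h₁ h₂

lemma exists_initialForm_eq_of_totalDegree_le {I : Ideal (MvPolynomial (Fin n) R)}
    (hI : ∀ f ∈ I, ∀ d : ℕ, homogeneousComponent d f ∈ I) (hp : p ∈ initialIdeal w I)
    (hpc : p.IsWeightedHomogeneous w c) (hp0 : p ≠ 0) :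
    ∃ g ∈ I, initialForm w g = p ∧ g.totalDegree ≤ p.totalDegree := by
  obtain ⟨g, hg, hgp⟩ := exists_sub_weightedHomogeneousComponent_mem_belowWeight hp c
  rw [hpc.weightedHomogeneousComponent_same] at hgp
  have hp_sum := sum_homogeneousComponent p
  set T := p.totalDegree
  refine ⟨∑ d ∈ Finset.range (T + 1), homogeneousComponent d g,
    sum_mem fun d _ => hI g hg d, initialForm_eq_of_sub_mem_belowWeight hpc hp0 ?_, ?_⟩
  · rw [← hp_sum, ← Finset.sum_sub_distrib]
    exact sum_mem fun d _ => map_sub (homogeneousComponent d) g p ▸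
      homogeneousComponent_mem_belowWeight hgp d
  · refine (totalDegree_finsetSum _ _).trans (Finset.sup_le fun d hd => ?_)
    exact (homogeneousComponent_isHomogeneous d g).totalDegree_le.trans
      (Nat.lt_succ_iff.mp (Finset.mem_range.mp hd))

lemma homogeneousComponent_mem_initialIdeal {I : Ideal (MvPolynomial (Fin n) R)}
    (hI : ∀ f ∈ I, ∀ d : ℕ, homogeneousComponent d f ∈ I) (hp : p ∈ initialIdeal w I) (d : ℕ) :
    homogeneousComponent d p ∈ initialIdeal w I := by
  have key (c : ℝ) :
      homogeneousComponent d (weightedHomogeneousComponent w c p) ∈ initialIdeal w I := by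
    obtain ⟨g, hg, hgp⟩ := exists_sub_weightedHomogeneousComponent_mem_belowWeight hp c
    rcases eq_or_ne (homogeneousComponent d (weightedHomogeneousComponent w c p)) 0 with h0 | h0
    · rw [h0]
      exact zero_mem _
    have hsub := homogeneousComponent_mem_belowWeight hgp d
    rw [map_sub] at hsub
    rw [← initialForm_eq_of_sub_mem_belowWeight
      ((weightedHomogeneousComponent_isWeightedHomogeneous c p).homogeneousComponent d) h0 hsub]
    exact initialForm_mem_initialIdeal (hI g hg d)
  rw [← sum_weightedHomogeneousComponent w p]
  exact finsum_induction
    (fun q : MvPolynomial (Fin n) R => homogeneousComponent d q ∈ initialIdeal w I) (by simp)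
    (fun q q' hq hq' => (map_add (homogeneousComponent d) q q').symm ▸ add_mem hq hq') key

lemma mem_of_initialForm_sub_one_mul_mem [IsDomain R] {I : Ideal (MvPolynomial (Fin n) R)}
    (hI : ∀ f ∈ I, ∀ d : ℕ, homogeneousComponent d f ∈ I) {l : MvPolynomial (Fin n) R}
    (hl : l.IsHomogeneous 1) (hreg : ∀ z, initialForm w l * z ∈ I → z ∈ I)
    {z : MvPolynomial (Fin n) R} (hz : initialForm w (l - 1) * z ∈ I) : z ∈ I := by
  have hl' : (initialForm w l).IsHomogeneous 1 := fun β hβ =>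
    hl (mem_support_iff.mp (support_initialForm_subset (mem_support_iff.mpr hβ)))
  have hone : initialForm w (-1 : MvPolynomial (Fin n) R) = -1 := by
    simpa using initialForm_C (w := w) (-1 : R)
  rw [sub_eq_add_neg] at hz
  rcases initialForm_add_eq_or (w := w) (f := l) (g := -1) with h | h | h | h
  · exact hreg z (h ▸ hz)
  · simpa [h, hone] using hz
  · rw [h, hone, ← sub_eq_add_neg] at hz
    exact mem_of_sub_one_mul_mem hI hl' one_pos hz
  · have h0 := congrArg (coeff 0) h
    rw [hone, coeff_add, hl'.coeff_eq_zero (d := 0) (by simp)] at h0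
    simp at h0

section Descent

variable [IsDomain R] {J : Ideal (MvPolynomial (Fin n) R)} {u : MvPolynomial (Fin n) R}

lemma initialForm_add_mul_mem (hJ : ∀ f ∈ J, ∀ d : ℕ, homogeneousComponent d f ∈ J)
    (hu : ∀ z, initialForm w u * z ∈ initialIdeal w J → z ∈ initialIdeal w J) (T : ℕ)
    {g f : MvPolynomial (Fin n) R} (hg : g ∈ J) (hT : f.totalDegree ≤ T) :
    initialForm w (g + f * u) ∈ initialIdeal w J ⊔ Ideal.span {initialForm w u} := by
  have hspan : initialForm w (f * u) ∈ Ideal.span {initialForm w u} := by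
    rw [initialForm_mul]
    exact Ideal.mul_mem_left _ _ (Ideal.mem_span_singleton_self _)
  have hg' : initialForm w g ∈ initialIdeal w J ⊔ Ideal.span {initialForm w u} :=
    Ideal.mem_sup_left (initialForm_mem_initialIdeal hg)
  rcases initialForm_add_eq_or (w := w) (f := g) (g := f * u) with h | h | h | hcancel
  · exact h ▸ hg'
  · exact h ▸ Ideal.mem_sup_right hspan
  · exact h ▸ add_mem hg' (Ideal.mem_sup_right hspan)
  rcases eq_or_ne f 0 with rfl | hf
  · simpa using hg'
  obtain ⟨c, hc, hf0, hfc⟩ := exists_initialForm_isWeightedHomogeneous (w := w) hf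
  have hmem : initialForm w f ∈ initialIdeal w J := by
    refine hu _ ?_
    rw [mul_comm, ← initialForm_mul, eq_neg_of_add_eq_zero_right hcancel]
    exact neg_mem (initialForm_mem_initialIdeal hg)
  obtain ⟨g₁, hg₁, hg₁f, hdeg⟩ := exists_initialForm_eq_of_totalDegree_le hJ hmem hc hf0
  have hlower : f - g₁ ∈ belowWeight R w c := by
    have := sub_initialForm_mem_belowWeight (f := g₁) (hg₁f ▸ hc) (hg₁f ▸ hf0)
    rw [show f - g₁ = (f - initialForm w f) - (g₁ - initialForm w g₁) by rw [hg₁f]; ring]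
    exact sub_mem hfc this
  have hT' : (f - g₁).totalDegree ≤ T := (totalDegree_sub f g₁).trans (max_le hT
    (hdeg.trans ((totalDegree_le_of_support_subset support_initialForm_subset).trans hT)))
  obtain ⟨α, hα⟩ := ne_zero_iff.mp hf0
  have hαf : α ∈ f.support := support_initialForm_subset (mem_support_iff.mpr hα)
  have hdecr := card_filter_weight_le_lt (E := (Finsupp.finite_of_degree_le T).toFinset) hlower
    ((Set.Finite.mem_toFinset _).mpr ((le_totalDegree hαf).trans hT)) hαf (hc hα)
  rw [show g + f * u = (g + g₁ * u) + (f - g₁) * u by ring]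
  exact initialForm_add_mul_mem hJ hu T (J.add_mem hg (J.mul_mem_right u hg₁)) hT'
termination_by #{α ∈ (Finsupp.finite_of_degree_le T).toFinset |
  (weight w α : WithBot ℝ) ≤ weightedTotalDegree' w f}
decreasing_by exact hdecr

theorem initialIdeal_sup_span_singleton (hJ : ∀ f ∈ J, ∀ d : ℕ, homogeneousComponent d f ∈ J)
    (hu : ∀ z, initialForm w u * z ∈ initialIdeal w J → z ∈ initialIdeal w J) :
    initialIdeal w (J ⊔ Ideal.span {u}) = initialIdeal w J ⊔ initialIdeal w (Ideal.span {u}) := by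
  refine le_antisymm (Ideal.span_le.mpr ?_)
    (sup_le (initialIdeal_mono le_sup_left) (initialIdeal_mono le_sup_right))
  rintro _ ⟨_, hf, rfl⟩
  obtain ⟨g, hg, _, hfu, rfl⟩ := Submodule.mem_sup.mp hf
  obtain ⟨f, rfl⟩ := Ideal.mem_span_singleton'.mp hfu
  have hspan : Ideal.span {initialForm w u} ≤ initialIdeal w (Ideal.span {u}) :=
    Ideal.span_le.mpr (Set.singleton_subset_iff.mpr
      (initialForm_mem_initialIdeal (Ideal.mem_span_singleton_self u)))
  exact SetLike.le_def.mp (sup_le_sup_left hspan _)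
    (initialForm_add_mul_mem hJ hu f.totalDegree hg le_rfl)

end Descent

end InitialForm

/-- If `In_w(ℓ)` is not a zero-divisor modulo `In_w(J)`, then
`In_w(J + ⟨ℓ − 1⟩) = In_w(J) + In_w(⟨ℓ − 1⟩)`. -/
theorem initialIdeal_sup_span_sub_one {n : ℕ}
    (J : Ideal (MvPolynomial (Fin (n + 1)) ℂ))
    (hJhom : ∀ f ∈ J, ∀ d : ℕ, homogeneousComponent d f ∈ J)
    (l : MvPolynomial (Fin (n + 1)) ℂ) (hl : l.IsHomogeneous 1)
    (w : Fin (n + 1) → ℝ)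
    (hnzd : Ideal.Quotient.mk (initialIdeal w J) (initialForm w l) ∈
      nonZeroDivisors (MvPolynomial (Fin (n + 1)) ℂ ⧸ initialIdeal w J)) :
    initialIdeal w (J + Ideal.span {l - 1}) =
      initialIdeal w J + initialIdeal w (Ideal.span {l - 1}) := by
  have hInJ : ∀ p ∈ initialIdeal w J, ∀ d : ℕ, homogeneousComponent d p ∈ initialIdeal w J :=
    fun _ hp d => homogeneousComponent_mem_initialIdeal hJhom hp d
  have hreg : ∀ z, initialForm w l * z ∈ initialIdeal w J → z ∈ initialIdeal w J :=
    fun _ => mem_of_mul_mem_of_mk_mem_nonZeroDivisors hnzd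
  exact initialIdeal_sup_span_singleton hJhom fun _ =>
    mem_of_initialForm_sub_one_mul_mem hInJ hl hreg
end
end

section
/- Suppose that no coordinate variable x_i lies in J (equivalently, the projective closure C̄ is not contained in any coordinate hyperplane), that v ∈ (ℂ*)^{n+1} satisfies the patch condition for J, and set ℓ = v_0 x_0 + … + v_n x_n. Let w ∈ ℚ^{n+1} satisfy w_i ≤ 0 for all i, w_j = 0 for some index j, and w_k ≠ 0 for some index k. Then for every point a ∈ (ℂ*)^{n+1} such that g(a) = 0 for all g ∈ In_w(J), one has In_w(ℓ)(a) ≠ 0. In particular, In_w(ℓ) is not a zero-divisor modulo the ideal generated by In_w(J) in the Laurent polynomial ring ℂ[x_0^{±1},…,x_n^{±1}]. -/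
open MvPolynomial
open scoped Classical

noncomputable section

/-- The Laurent polynomial ring in `n` variables over `R`. -/
abbrev MvLaurent (n : ℕ) (R : Type*) [CommRing R] : Type _ :=
  AddMonoidAlgebra R (Fin n →₀ ℤ)

/-- The canonical ring map from the polynomial ring to the Laurent polynomial ring. -/
def polyToLaurent {n : ℕ} {R : Type*} [CommRing R] :
    MvPolynomial (Fin n) R →+* MvLaurent n R :=
  AddMonoidAlgebra.mapDomainRingHom R
    (Finsupp.mapRange.addMonoidHom (Nat.castAddMonoidHom ℤ))

/-- `v` satisfies the patch condition for a homogeneous ideal `J ⊆ ℂ[x₀,…,xₙ]`: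
every nonzero common zero of `J` having some zero coordinate satisfies `v · a ≠ 0`. -/
def PatchCond {n : ℕ} (J : Ideal (MvPolynomial (Fin (n + 1)) ℂ)) (v : Fin (n + 1) → ℂ) : Prop :=
  ∀ a : Fin (n + 1) → ℂ, a ≠ 0 → (∀ g ∈ J, eval a g = 0) → (∃ i, a i = 0) →
    ∑ i, v i * a i ≠ 0

/-- The homogeneous vanishing ideal of the projective closure of the affine variety of `I`:
the ideal generated by all homogeneous `F` with dehomogenization `F(1,x₁,…,xₙ) ∈ I`. -/
def projClosureIdeal {n : ℕ} (I : Ideal (MvPolynomial (Fin n) ℂ)) :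
    Ideal (MvPolynomial (Fin (n + 1)) ℂ) :=
  Ideal.span {F | (∃ d, F.IsHomogeneous d) ∧
    aeval (Fin.cons (1 : MvPolynomial (Fin n) ℂ) X) F ∈ I}

/-! Let `a` be a torus point on which `In_w(J)` vanishes, and let `b` be `a` with its coordinates
of negative weight set to `0` (the limit of `t^(-w) • a` as `t → 0`). Since `w ≤ 0`, every
monomial has weight `≤ 0`, so for every `f` either `f(b) = 0` (no monomial of weight `0`) or
`f(b) = In_w(f)(a)`; hence `b` is a zero of `J`. It is nonzero (`b_j = a_j`) and has a zero
coordinate (`b_k = 0`), so the patch condition gives `0 ≠ ℓ(b) = In_w(ℓ)(a)`. By the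
Nullstellensatz every maximal ideal of the Laurent ring containing `In_w(J)` is the ideal of a
torus point, so `In_w(ℓ)` is even a unit modulo `In_w(J)`. -/

section LimitPoint

variable {n : ℕ} {R : Type*} {w : Fin n → ℝ}

lemma wdeg_nonpos (hw : ∀ i, w i ≤ 0) (α : Fin n →₀ ℕ) : wdeg w α ≤ 0 :=
  Finset.sum_nonpos fun i _ => mul_nonpos_of_nonpos_of_nonneg (hw i) (Nat.cast_nonneg _)

lemma wdeg_eq_zero_iff (hw : ∀ i, w i ≤ 0) (α : Fin n →₀ ℕ) :
    wdeg w α = 0 ↔ ∀ i, α i ≠ 0 → w i = 0 := by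
  rw [wdeg, Finset.sum_eq_zero_iff_of_nonpos
    fun i _ => mul_nonpos_of_nonpos_of_nonneg (hw i) (Nat.cast_nonneg _)]
  simp only [Finset.mem_univ, true_implies, mul_eq_zero, Nat.cast_eq_zero,
    or_iff_not_imp_right]

lemma wdeg_single (j : Fin n) : wdeg w (Finsupp.single j 1) = w j := by
  simp [wdeg, Finsupp.single_apply]

def limitPoint [Zero R] (w : Fin n → ℝ) (a : Fin n → R) : Fin n → R :=
  fun i => if w i = 0 then a i else 0

lemma eval_limitPoint_monomial [CommSemiring R] (hw : ∀ i, w i ≤ 0) (a : Fin n → R)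
    (α : Fin n →₀ ℕ) (c : R) :
    eval (limitPoint w a) (monomial α c) =
      if wdeg w α = 0 then eval a (monomial α c) else 0 := by
  rw [eval_monomial, eval_monomial]
  split_ifs with h
  · refine congrArg _ (Finsupp.prod_congr fun i hi => ?_)
    simp [limitPoint, (wdeg_eq_zero_iff hw α).mp h i (Finsupp.mem_support_iff.mp hi)]
  · obtain ⟨i, hαi, hwi⟩ : ∃ i, α i ≠ 0 ∧ w i ≠ 0 := by
      simpa [wdeg_eq_zero_iff hw] using h
    refine mul_eq_zero_of_right _ (Finset.prod_eq_zero (Finsupp.mem_support_iff.mpr hαi) ?_)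
    simp [limitPoint, hwi, hαi]

lemma eval_limitPoint [CommSemiring R] (hw : ∀ i, w i ≤ 0) (a : Fin n → R)
    (f : MvPolynomial (Fin n) R) :
    eval (limitPoint w a) f =
      ∑ α ∈ f.support with wdeg w α = 0, eval a (monomial α (coeff α f)) := by
  conv_lhs => rw [← f.support_sum_monomial_coeff]
  rw [map_sum, Finset.sum_filter]
  exact Finset.sum_congr rfl fun α _ => eval_limitPoint_monomial hw a α _

lemma eval_limitPoint_of_wdeg_eq_zero [CommSemiring R] (hw : ∀ i, w i ≤ 0) (a : Fin n → R)
    {f : MvPolynomial (Fin n) R} {α₀ : Fin n →₀ ℕ} (hα₀ : α₀ ∈ f.support)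
    (h0 : wdeg w α₀ = 0) :
    eval (limitPoint w a) f = eval a (initialForm w f) := by
  rw [eval_limitPoint hw, initialForm, map_sum]
  refine Finset.sum_congr (Finset.filter_congr fun α _ => ⟨fun h β _ => ?_, fun h => ?_⟩)
    fun _ _ => rfl
  · exact h ▸ wdeg_nonpos hw β
  · exact le_antisymm (wdeg_nonpos hw α) (h0 ▸ h α₀ hα₀)

lemma eval_limitPoint_eq_zero [CommSemiring R] (hw : ∀ i, w i ≤ 0) {a : Fin n → R}
    {f : MvPolynomial (Fin n) R} (h : eval a (initialForm w f) = 0) :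
    eval (limitPoint w a) f = 0 := by
  by_cases h0 : ∃ α ∈ f.support, wdeg w α = 0
  · obtain ⟨α, hα, h0⟩ := h0
    rw [eval_limitPoint_of_wdeg_eq_zero hw a hα h0, h]
  · rw [eval_limitPoint hw, Finset.filter_false_of_mem fun α hα h => h0 ⟨α, hα, h⟩,
      Finset.sum_empty]

lemma eval_limitPoint_eq_zero_of_mem [CommRing R] (hw : ∀ i, w i ≤ 0) {a : Fin n → R}
    {J : Ideal (MvPolynomial (Fin n) R)} (ha : ∀ g ∈ initialIdeal w J, eval a g = 0)
    {g : MvPolynomial (Fin n) R} (hg : g ∈ J) : eval (limitPoint w a) g = 0 :=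
  eval_limitPoint_eq_zero hw (ha _ (Ideal.subset_span ⟨g, hg, rfl⟩))

end LimitPoint

lemma coeff_single_sum_C_mul_X {n : ℕ} {R : Type*} [CommSemiring R] (v : Fin n → R)
    (j : Fin n) :
    coeff (Finsupp.single j 1) (∑ i, C (v i) * X i) = v j := by
  simp [coeff_sum, coeff_C_mul, coeff_X, Finsupp.single_left_inj one_ne_zero]

theorem eval_initialForm_linearForm_ne_zero {n : ℕ}
    {J : Ideal (MvPolynomial (Fin (n + 1)) ℂ)} {v : Fin (n + 1) → ℂ} (hpatch : PatchCond J v)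
    {w : Fin (n + 1) → ℝ} (hw : ∀ i, w i ≤ 0) {j k : Fin (n + 1)} (hj : w j = 0)
    (hk : w k ≠ 0) (hv : v j ≠ 0) {a : Fin (n + 1) → ℂ} (ha : a j ≠ 0)
    (haJ : ∀ g ∈ initialIdeal w J, eval a g = 0) :
    eval a (initialForm w (∑ i, C (v i) * X i)) ≠ 0 := by
  have hne : limitPoint w a ≠ 0 := fun h => ha (by simpa [limitPoint, hj] using congrFun h j)
  have hb := hpatch (limitPoint w a) hne
    (fun g hg => eval_limitPoint_eq_zero_of_mem hw haJ hg) ⟨k, by simp [limitPoint, hk]⟩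
  have hl : (Finsupp.single j 1 : Fin (n + 1) →₀ ℕ) ∈ (∑ i, C (v i) * X i).support := by
    rwa [mem_support_iff, coeff_single_sum_C_mul_X]
  rw [← eval_limitPoint_of_wdeg_eq_zero hw a hl (by rw [wdeg_single, hj])]
  simpa using hb

section Laurent

variable {n : ℕ}

lemma polyToLaurent_C {R : Type*} [CommRing R] (r : R) :
    polyToLaurent (C r : MvPolynomial (Fin n) R) = algebraMap R (MvLaurent n R) r := by
  simp [polyToLaurent, C_apply, ← single_eq_monomial, AddMonoidAlgebra.mapDomainRingHom]

lemma isUnit_polyToLaurent_X {R : Type*} [CommRing R] (i : Fin n) :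
    IsUnit (polyToLaurent (X i : MvPolynomial (Fin n) R)) := by
  have h : polyToLaurent (X i : MvPolynomial (Fin n) R) =
      AddMonoidAlgebra.single (Finsupp.single i 1) 1 := by
    simp [polyToLaurent, X, ← single_eq_monomial, AddMonoidAlgebra.mapDomainRingHom]
  rw [h]
  exact .of_mul_eq_one (AddMonoidAlgebra.single (-Finsupp.single i 1) 1)
    (by simp [AddMonoidAlgebra.one_def])

instance finiteType_mvLaurent {R : Type*} [CommRing R] : Algebra.FiniteType R (MvLaurent n R) :=
  have : AddMonoid.FG (Fin n →₀ ℤ) :=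
    AddGroup.fg_iff_addMonoid_fg.mp (Module.Finite.iff_addGroup_fg.mp inferInstance)
  AddMonoidAlgebra.finiteType_of_fg _ _

variable {k : Type*} [Field k] [IsAlgClosed k]

theorem exists_torus_point_of_isMaximal (M : Ideal (MvLaurent n k)) [M.IsMaximal] :
    ∃ x : Fin n → k, (∀ i, x i ≠ 0) ∧ ∀ p, polyToLaurent p ∈ M → eval x p = 0 := by
  let := Ideal.Quotient.field M
  have := finite_of_finite_type_of_isJacobsonRing k (MvLaurent n k ⧸ M)
  let φ : (MvLaurent n k ⧸ M) →ₐ[k] k := IsAlgClosed.lift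
  let ψ : MvPolynomial (Fin n) k →+* k :=
    φ.toRingHom.comp ((Ideal.Quotient.mk M).comp polyToLaurent)
  have hψC (r : k) : ψ (C r) = r := by
    rw [RingHom.comp_apply, RingHom.comp_apply, polyToLaurent_C, Ideal.Quotient.mk_algebraMap]
    exact φ.commutes r
  have hψ : ψ = eval fun i => ψ (X i) :=
    ringHom_ext (fun r => by rw [hψC, eval_C]) (fun i => by rw [eval_X])
  refine ⟨fun i => ψ (X i), fun i => ((isUnit_polyToLaurent_X i).map
    (φ.toRingHom.comp (Ideal.Quotient.mk M))).ne_zero, fun p hp => ?_⟩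
  rw [← hψ]
  simp [ψ, Ideal.Quotient.eq_zero_iff_mem.mpr hp]

theorem isUnit_mk_polyToLaurent (K : Ideal (MvPolynomial (Fin n) k))
    {f : MvPolynomial (Fin n) k}
    (hf : ∀ a : Fin n → k, (∀ i, a i ≠ 0) → (∀ g ∈ K, eval a g = 0) → eval a f ≠ 0) :
    IsUnit (Ideal.Quotient.mk (K.map polyToLaurent) (polyToLaurent f)) := by
  by_contra hU
  obtain ⟨m, hm, hfm⟩ := exists_max_ideal_of_mem_nonunits hU
  have := Ideal.comap_isMaximal_of_surjective _ Ideal.Quotient.mk_surjective (K := m)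
  obtain ⟨x, hx, hxM⟩ := exists_torus_point_of_isMaximal (m.comap (Ideal.Quotient.mk _))
  refine hf x hx (fun g hg => hxM g ?_) (hxM f hfm)
  simp [Ideal.Quotient.eq_zero_iff_mem.mpr (Ideal.mem_map_of_mem _ hg)]

end Laurent

theorem initialForm_patch_nonvanishing_general {n : ℕ}
    (J : Ideal (MvPolynomial (Fin (n + 1)) ℂ))
    (v : Fin (n + 1) → ℂ) (hv : ∀ i, v i ≠ 0) (hpatch : PatchCond J v)
    (l : MvPolynomial (Fin (n + 1)) ℂ) (hldef : l = ∑ i, MvPolynomial.C (v i) * X i)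
    (w : Fin (n + 1) → ℚ) (hw0 : ∀ i, w i ≤ 0) (hwj : ∃ j, w j = 0)
    (hwk : ∃ k, w k ≠ 0) :
    (∀ a : Fin (n + 1) → ℂ, (∀ i, a i ≠ 0) →
        (∀ g ∈ initialIdeal (fun i => (w i : ℝ)) J, eval a g = 0) →
        eval a (initialForm (fun i => (w i : ℝ)) l) ≠ 0) ∧
    Ideal.Quotient.mk (Ideal.map polyToLaurent (initialIdeal (fun i => (w i : ℝ)) J))
        (polyToLaurent (initialForm (fun i => (w i : ℝ)) l)) ∈
      nonZeroDivisors (MvLaurent (n + 1) ℂ ⧸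
        Ideal.map polyToLaurent (initialIdeal (fun i => (w i : ℝ)) J)) := by
  obtain ⟨j, hj⟩ := hwj
  obtain ⟨k, hk⟩ := hwk
  have hpoint : ∀ a : Fin (n + 1) → ℂ, (∀ i, a i ≠ 0) →
      (∀ g ∈ initialIdeal (fun i => (w i : ℝ)) J, eval a g = 0) →
      eval a (initialForm (fun i => (w i : ℝ)) l) ≠ 0 := fun a ha haJ =>
    hldef ▸ eval_initialForm_linearForm_ne_zero hpatch (fun i => Rat.cast_nonpos.mpr (hw0 i))
      (j := j) (k := k) (by simp [hj]) (by simp [hk]) (hv j) (ha j) haJ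
  exact ⟨hpoint, (isUnit_mk_polyToLaurent _ hpoint).mem_nonZeroDivisors⟩

/-- If the curve's projective closure meets no coordinate hyperplane in the patch `v·x = 1`
and `w ≤ 0` has a zero and a nonzero coordinate, then `In_w(ℓ)` does not vanish at any point of
the torus in the variety of `In_w(J)`; in particular `In_w(ℓ)` is not a zero-divisor modulo the
ideal generated by `In_w(J)` in the Laurent polynomial ring. -/
theorem initialForm_patch_nonvanishing {n : ℕ}
    (I : Ideal (MvPolynomial (Fin n) ℂ)) (hI : I.IsPrime)
    (hdim : ringKrullDim (MvPolynomial (Fin n) ℂ ⧸ I) = 1)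
    (J : Ideal (MvPolynomial (Fin (n + 1)) ℂ)) (hJ : J = projClosureIdeal I)
    (hXJ : ∀ i, X i ∉ J)
    (v : Fin (n + 1) → ℂ) (hv : ∀ i, v i ≠ 0) (hpatch : PatchCond J v)
    (l : MvPolynomial (Fin (n + 1)) ℂ) (hldef : l = ∑ i, MvPolynomial.C (v i) * X i)
    (w : Fin (n + 1) → ℚ) (hw0 : ∀ i, w i ≤ 0) (hwj : ∃ j, w j = 0)
    (hwk : ∃ k, w k ≠ 0) :
    (∀ a : Fin (n + 1) → ℂ, (∀ i, a i ≠ 0) →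
        (∀ g ∈ initialIdeal (fun i => (w i : ℝ)) J, eval a g = 0) →
        eval a (initialForm (fun i => (w i : ℝ)) l) ≠ 0) ∧
    Ideal.Quotient.mk (Ideal.map polyToLaurent (initialIdeal (fun i => (w i : ℝ)) J))
        (polyToLaurent (initialForm (fun i => (w i : ℝ)) l)) ∈
      nonZeroDivisors (MvLaurent (n + 1) ℂ ⧸
        Ideal.map polyToLaurent (initialIdeal (fun i => (w i : ℝ)) J)) :=
  initialForm_patch_nonvanishing_general J v hv hpatch l hldef w hw0 hwj hwk

end
end

section
/- Let v ∈ (ℂ*)^{n+1} satisfy the patch condition for J, and set Î = J + ⟨v_0 x_0 + … + v_n x_n − 1⟩ ⊆ ℂ[x_0,…,x_n]. Let K = ℂ((t)). Then for every nonzero u ∈ ℤ^n the following are equivalent: (a) there exists z ∈ (K*)^n with f(z) = 0 for all f ∈ I and −val(z_i) = u_i for all i = 1,…,n; (b) there exists y ∈ (K*)^{n+1} with f(y) = 0 for all f ∈ Î, val(y_i) ≥ 0 for all i = 0,…,n, and u_i = val(y_0) − val(y_i) for all i = 1,…,n. -/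
/-!
Put `g = (1, z)`. The generators of `J` are homogeneous, so the zeros of `J` form a cone; it
contains `g` and all its multiples `c • g`, and conversely `y₀⁻¹ • y = (1, y₁/y₀, …, yₙ/y₀)`
turns a zero of `Î` into a zero of `I`, with `u_i = val y₀ − val y_i`.

For the forward direction rescale `g` by `t^{-m}`, `m = min_i val g_i`, so that all valuations
are `≥ 0` and one is `0`. Reducing mod `t` gives a nonzero point `a` of the cone of `J`; since
`u ≠ 0` the `val g_i` are not all equal, so `a` has a zero coordinate. The patch condition gives
`v · a ≠ 0`: the linear form `ℓ = Σ vᵢ xᵢ` takes at `t^{-m} g` a value `E` with nonzero constant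
term, hence `val E ≤ 0`, and `y = E⁻¹ t^{-m} g` lies on `ℓ = 1` with nonnegative valuations.
-/

open MvPolynomial
open scoped Classical

noncomputable section

namespace MvPolynomial

theorem IsHomogeneous.aeval_smul {R S σ : Type*} [CommSemiring R] [CommSemiring S]
    [Algebra R S] {φ : MvPolynomial σ R} {d : ℕ} (hφ : φ.IsHomogeneous d) (c : S)
    (x : σ → S) : MvPolynomial.aeval (c • x) φ = c ^ d * MvPolynomial.aeval x φ := by
  conv_lhs => rw [φ.as_sum]
  conv_rhs => rw [φ.as_sum]
  simp only [map_sum, Finset.mul_sum, aeval_monomial]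
  refine Finset.sum_congr rfl fun m hm => ?_
  simp only [Finsupp.prod, Pi.smul_apply, smul_eq_mul, mul_pow, Finset.prod_mul_distrib,
    Finset.prod_pow_eq_pow_sum, ← hφ.degree_eq_sum_deg_support hm]
  ring

variable {R : Type*} [CommSemiring R] {n : ℕ}

theorem aeval_aeval_cons_one_X {S : Type*} [CommSemiring S] [Algebra R S] (z : Fin n → S)
    (F : MvPolynomial (Fin (n + 1)) R) :
    aeval z (aeval (Fin.cons (1 : MvPolynomial (Fin n) R) X) F) = aeval (Fin.cons 1 z) F := by
  have h : (fun i => aeval z ((Fin.cons 1 X : Fin (n + 1) → MvPolynomial (Fin n) R) i)) =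
      (Fin.cons 1 z : Fin (n + 1) → S) := by
    funext i
    refine Fin.cases ?_ (fun j => ?_) i <;> simp
  rw [comp_aeval_apply, h]

def homogenization (f : MvPolynomial (Fin n) R) : MvPolynomial (Fin (n + 1)) R :=
  ∑ m ∈ f.support, monomial (Finsupp.cons (f.totalDegree - m.degree) m) (coeff m f)

theorem isHomogeneous_homogenization (f : MvPolynomial (Fin n) R) :
    f.homogenization.IsHomogeneous f.totalDegree := by
  refine IsHomogeneous.sum _ _ _ fun m hm => isHomogeneous_monomial _ ?_
  have hle : m.degree ≤ f.totalDegree := by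
    simpa [Finsupp.degree_apply, Finsupp.sum] using le_totalDegree hm
  rw [Finsupp.degree_eq_sum, Fin.sum_univ_succ, Finsupp.cons_zero]
  simp only [Finsupp.cons_succ, ← Finsupp.degree_eq_sum]
  omega

theorem aeval_cons_one_X_homogenization (f : MvPolynomial (Fin n) R) :
    aeval (Fin.cons (1 : MvPolynomial (Fin n) R) X) f.homogenization = f := by
  rw [homogenization, map_sum]
  conv_rhs => rw [f.as_sum]
  refine Finset.sum_congr rfl fun m _ => ?_
  rw [aeval_monomial, Finsupp.prod_pow, Fin.prod_univ_succ, monomial_eq, Finsupp.prod_pow]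
  simp only [algebraMap_eq, Fin.cons_zero, Finsupp.cons_zero, one_pow, Fin.cons_succ,
    Finsupp.cons_succ, one_mul]

theorem aeval_eq_zero_of_mem_span {σ S : Type*} [CommSemiring S] [Algebra R S]
    {s : Set (MvPolynomial σ R)} {w : σ → S} (h : ∀ F ∈ s, aeval w F = 0) :
    ∀ F ∈ Ideal.span s, aeval w F = 0 :=
  fun _ hF => (Ideal.span_le (I := RingHom.ker (aeval w))).mpr h hF

theorem aeval_eq_zero_of_mem_sup_span_sub_one {σ R S : Type*} [CommRing R] [CommRing S]
    [Algebra R S] {J : Ideal (MvPolynomial σ R)} {ℓ : MvPolynomial σ R} {w : σ → S}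
    (hJ : ∀ F ∈ J, aeval w F = 0) (hℓ : aeval w ℓ = 1) :
    ∀ F ∈ J ⊔ Ideal.span {ℓ - 1}, aeval w F = 0 := by
  intro F hF
  refine (sup_le (c := RingHom.ker (aeval w)) (fun G hG => hJ G hG) ?_) hF
  rw [Ideal.span_le, Set.singleton_subset_iff, SetLike.mem_coe, RingHom.mem_ker, map_sub, hℓ,
    map_one, sub_self]

end MvPolynomial

namespace LaurentSeries

variable {R : Type*}

theorem order_inv [Field R] {x : LaurentSeries R} (hx : x ≠ 0) : x⁻¹.order = -x.order := by
  have h := HahnSeries.order_mul (inv_ne_zero hx) hx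
  rw [inv_mul_cancel₀ hx, HahnSeries.order_one] at h
  omega

theorem order_div [Field R] {x y : LaurentSeries R} (hx : x ≠ 0) (hy : y ≠ 0) :
    (x / y).order = x.order - y.order := by
  rw [div_eq_mul_inv, HahnSeries.order_mul hx (inv_ne_zero hy), order_inv hy, sub_eq_add_neg]

theorem exists_ofPowerSeries_eq [CommRing R] {x : LaurentSeries R} (hx : 0 ≤ x.order) :
    ∃ P : PowerSeries R, HahnSeries.ofPowerSeries ℤ R P = x :=
  ⟨_, X_order_mul_powerSeriesPart (Int.toNat_of_nonneg hx)⟩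

theorem coeff_zero_ofPowerSeries [CommRing R] (P : PowerSeries R) :
    (HahnSeries.ofPowerSeries ℤ R P).coeff 0 = PowerSeries.constantCoeff P := by
  simpa using HahnSeries.ofPowerSeries_apply_coeff (Γ := ℤ) P 0

theorem coeff_zero_aeval_of_order_nonneg [CommRing R] {σ : Type*} {w : σ → LaurentSeries R}
    (hw : ∀ i, 0 ≤ (w i).order) (p : MvPolynomial σ R) :
    (aeval w p).coeff 0 = eval (fun i => (w i).coeff 0) p := by
  choose W hW using fun i => exists_ofPowerSeries_eq (hw i)
  obtain rfl : (fun i => HahnSeries.ofPowerSeries ℤ R (W i)) = w := funext hW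
  have hlift : aeval (fun i => HahnSeries.ofPowerSeries ℤ R (W i)) p =
      HahnSeries.ofPowerSeries ℤ R (aeval W p) := by
    rw [map_aeval, aeval_eq_eval₂Hom]
    rfl
  have hC : (PowerSeries.constantCoeff (R := R)).comp (algebraMap R (PowerSeries R)) =
      RingHom.id R := PowerSeries.constantCoeff_comp_C
  rw [hlift, coeff_zero_ofPowerSeries, map_aeval, hC]
  simp only [coeff_zero_ofPowerSeries]
  rfl

end LaurentSeries

theorem Fin.cons_one_ne_zero {M : Type*} [MulZeroOneClass M] [NeZero (1 : M)] {n : ℕ}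
    {z : Fin n → M} (hz : ∀ i, z i ≠ 0) : ∀ i, (Fin.cons 1 z : Fin (n + 1) → M) i ≠ 0 :=
  Fin.cases (by simp) fun j => by simpa using hz j

section projClosureIdeal

variable {n : ℕ} {I : Ideal (MvPolynomial (Fin n) ℂ)} {S : Type*} [CommRing S] [Algebra ℂ S]

theorem projClosureIdeal_aeval_smul_eq_zero {w : Fin (n + 1) → S}
    (h : ∀ F ∈ projClosureIdeal I, aeval w F = 0) (c : S) :
    ∀ F ∈ projClosureIdeal I, aeval (c • w) F = 0 := by
  refine aeval_eq_zero_of_mem_span fun F hF => ?_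
  obtain ⟨d, hd⟩ := hF.1
  rw [hd.aeval_smul, h F (Ideal.subset_span hF), mul_zero]

theorem projClosureIdeal_aeval_cons_one_eq_zero_iff (z : Fin n → S) :
    (∀ F ∈ projClosureIdeal I, aeval (Fin.cons 1 z) F = 0) ↔ ∀ f ∈ I, aeval z f = 0 := by
  refine ⟨fun h f hf => ?_, fun h => aeval_eq_zero_of_mem_span fun F hF => ?_⟩
  · have hmem : f.homogenization ∈ projClosureIdeal I :=
      Ideal.subset_span ⟨⟨_, isHomogeneous_homogenization f⟩,
        by rwa [aeval_cons_one_X_homogenization]⟩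
    have := h _ hmem
    rwa [← aeval_aeval_cons_one_X, aeval_cons_one_X_homogenization] at this
  · rw [← aeval_aeval_cons_one_X]
    exact h _ hF.2

theorem projClosureIdeal_aeval_smul_cons_one_eq_zero {z : Fin n → S}
    (hz : ∀ f ∈ I, aeval z f = 0) (c : S) :
    ∀ F ∈ projClosureIdeal I, aeval (c • (Fin.cons 1 z : Fin (n + 1) → S)) F = 0 :=
  projClosureIdeal_aeval_smul_eq_zero ((projClosureIdeal_aeval_cons_one_eq_zero_iff z).2 hz) c

theorem aeval_div_eq_zero_of_projClosureIdeal {K : Type*} [Field K] [Algebra ℂ K]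
    {y : Fin (n + 1) → K} (hy0 : y 0 ≠ 0) (hy : ∀ F ∈ projClosureIdeal I, aeval y F = 0) :
    ∀ f ∈ I, aeval (fun i => y i.succ / y 0) f = 0 := by
  have hcons : (Fin.cons 1 fun i => y i.succ / y 0 : Fin (n + 1) → K) = (y 0)⁻¹ • y := by
    funext i
    refine Fin.cases ?_ (fun j => ?_) i
    · simp [hy0]
    · simp [div_eq_inv_mul]
  rw [← projClosureIdeal_aeval_cons_one_eq_zero_iff, hcons]
  exact projClosureIdeal_aeval_smul_eq_zero hy _

end projClosureIdeal

section PatchCond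

variable {n : ℕ} {v : Fin (n + 1) → ℂ}

theorem PatchCond.coeff_zero_aeval_ne_zero {J : Ideal (MvPolynomial (Fin (n + 1)) ℂ)}
    (hpatch : PatchCond J v) {w : Fin (n + 1) → LaurentSeries ℂ}
    (hJ : ∀ F ∈ J, aeval w F = 0) (hw : ∀ i, 0 ≤ (w i).order)
    (hne : ∃ i, (w i).coeff 0 ≠ 0) (hzero : ∃ i, (w i).coeff 0 = 0) :
    (aeval w (∑ i, C (v i) * X i)).coeff 0 ≠ 0 := by
  obtain ⟨j, hj⟩ := hne
  have hJ0 : ∀ F ∈ J, eval (fun i => (w i).coeff 0) F = 0 := fun F hF => by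
    rw [← LaurentSeries.coeff_zero_aeval_of_order_nonneg hw, hJ F hF, HahnSeries.coeff_zero]
  rw [LaurentSeries.coeff_zero_aeval_of_order_nonneg hw]
  simpa using hpatch _ (fun h => hj (congrFun h j)) hJ0 hzero

theorem PatchCond.exists_smul_aeval_eq_one {I : Ideal (MvPolynomial (Fin n) ℂ)}
    (hpatch : PatchCond (projClosureIdeal I) v) {w : Fin (n + 1) → LaurentSeries ℂ}
    (hw0 : ∀ i, w i ≠ 0) (hJ : ∀ F ∈ projClosureIdeal I, aeval w F = 0)
    (hw : ∀ i, 0 ≤ (w i).order) (hne : ∃ i, (w i).coeff 0 ≠ 0)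
    (hzero : ∃ i, (w i).coeff 0 = 0) :
    ∃ c : LaurentSeries ℂ, c ≠ 0 ∧ (∀ i, 0 ≤ (c * w i).order) ∧
      aeval (c • w) (∑ i, C (v i) * X i) = 1 := by
  set E := aeval w (∑ i, C (v i) * X i)
  have hE : E.coeff 0 ≠ 0 := hpatch.coeff_zero_aeval_ne_zero hJ hw hne hzero
  have hE0 : E ≠ 0 := HahnSeries.ne_zero_of_coeff_ne_zero hE
  refine ⟨E⁻¹, inv_ne_zero hE0, fun i => ?_, ?_⟩
  · have hEord : E.order ≤ 0 := HahnSeries.order_le_of_coeff_ne_zero hE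
    rw [HahnSeries.order_mul (inv_ne_zero hE0) (hw0 i), LaurentSeries.order_inv hE0]
    linarith [hw i]
  · have hℓ : (∑ i, C (v i) * X i : MvPolynomial (Fin (n + 1)) ℂ).IsHomogeneous 1 :=
      IsHomogeneous.sum _ _ _ fun i _ => isHomogeneous_C_mul_X (v i) i
    rw [hℓ.aeval_smul, pow_one, inv_mul_cancel₀ hE0]

theorem PatchCond.exists_smul_cons_one_aeval_eq_one
    {I : Ideal (MvPolynomial (Fin n) ℂ)} (hpatch : PatchCond (projClosureIdeal I) v)
    {z : Fin n → LaurentSeries ℂ} (hz0 : ∀ i, z i ≠ 0) (hzI : ∀ f ∈ I, aeval z f = 0)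
    (hnz : ∃ i, (z i).order ≠ 0) :
    ∃ c : LaurentSeries ℂ, c ≠ 0 ∧
      (∀ i, 0 ≤ (c * (Fin.cons 1 z : Fin (n + 1) → LaurentSeries ℂ) i).order) ∧
      aeval (c • (Fin.cons 1 z : Fin (n + 1) → LaurentSeries ℂ)) (∑ i, C (v i) * X i) = 1 := by
  set g : Fin (n + 1) → LaurentSeries ℂ := Fin.cons 1 z with hg
  have hg0 : ∀ i, g i ≠ 0 := Fin.cons_one_ne_zero hz0
  obtain ⟨j, -, hj⟩ := Finset.exists_mem_eq_inf' Finset.univ_nonempty fun i => (g i).order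
  have hmin : ∀ i, (g j).order ≤ (g i).order :=
    fun i => hj ▸ Finset.inf'_le _ (Finset.mem_univ i)
  set t : LaurentSeries ℂ := HahnSeries.single (-(g j).order) 1
  have ht0 : t ≠ 0 := HahnSeries.single_ne_zero one_ne_zero
  have hord : ∀ i, (t * g i).order = (g i).order - (g j).order := fun i => by
    rw [HahnSeries.order_single_mul_of_isRegular isRegular_one (hg0 i)]
    ring
  have hzero : ∃ i, (t * g i).coeff 0 = 0 := by
    obtain ⟨k, hk⟩ := hnz
    obtain ⟨i, hi⟩ : ∃ i, (g j).order < (g i).order := by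
      by_contra! h
      have h0 := le_antisymm (h 0) (hmin 0)
      have hk' := le_antisymm (h k.succ) (hmin k.succ)
      simp only [hg, Fin.cons_zero, Fin.cons_succ, HahnSeries.order_one] at h0 hk'
      omega
    exact ⟨i, HahnSeries.coeff_eq_zero_of_lt_order (by rw [hord]; omega)⟩
  have hne : (t * g j).coeff 0 ≠ 0 := by
    rw [← sub_self (g j).order, ← hord]
    exact fun h => mul_ne_zero ht0 (hg0 j) (HahnSeries.coeff_order_eq_zero.mp h)
  obtain ⟨c, hc0, hcord, hc⟩ := hpatch.exists_smul_aeval_eq_one (w := t • g)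
    (fun i => mul_ne_zero ht0 (hg0 i)) (projClosureIdeal_aeval_smul_cons_one_eq_zero hzI t)
    (fun i => by simp [hord, hmin]) ⟨j, hne⟩ hzero
  refine ⟨c * t, mul_ne_zero hc0 ht0, fun i => by simpa [mul_assoc] using hcord i, ?_⟩
  rwa [smul_smul] at hc

end PatchCond

theorem trop_patch_equiv_general {n : ℕ}
    (I : Ideal (MvPolynomial (Fin n) ℂ))
    (v : Fin (n + 1) → ℂ)
    (hpatch : PatchCond (projClosureIdeal I) v)
    (Ihat : Ideal (MvPolynomial (Fin (n + 1)) ℂ))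
    (hIhat : Ihat = projClosureIdeal I ⊔
      Ideal.span {(∑ i, MvPolynomial.C (v i) * X i) - 1})
    (u : Fin n → ℤ) (hu : u ≠ 0) :
    (∃ z : Fin n → LaurentSeries ℂ, (∀ i, z i ≠ 0) ∧
        (∀ f ∈ I, aeval z f = 0) ∧ ∀ i, -(z i).order = u i) ↔
    (∃ y : Fin (n + 1) → LaurentSeries ℂ, (∀ i, y i ≠ 0) ∧
        (∀ f ∈ Ihat, aeval y f = 0) ∧ (∀ i, 0 ≤ (y i).order) ∧
        ∀ i : Fin n, u i = (y 0).order - (y i.succ).order) := by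
  subst hIhat
  constructor
  · rintro ⟨z, hz0, hzI, hzu⟩
    have hnz : ∃ i, (z i).order ≠ 0 := by
      by_contra! h
      exact hu (funext fun i => by simp [← hzu i, h i])
    obtain ⟨c, hc0, hcord, hc⟩ := hpatch.exists_smul_cons_one_aeval_eq_one hz0 hzI hnz
    have hg0 := Fin.cons_one_ne_zero hz0
    refine ⟨c • (Fin.cons 1 z : Fin (n + 1) → LaurentSeries ℂ), fun i => mul_ne_zero hc0 (hg0 i),
      aeval_eq_zero_of_mem_sup_span_sub_one (projClosureIdeal_aeval_smul_cons_one_eq_zero hzI c) hc,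
      hcord, fun i => ?_⟩
    simp only [Pi.smul_apply, smul_eq_mul, HahnSeries.order_mul hc0 (hg0 _)]
    simp [← hzu i]
  · rintro ⟨y, hy0, hyI, -, hyu⟩
    refine ⟨fun i => y i.succ / y 0, fun i => div_ne_zero (hy0 _) (hy0 0),
      aeval_div_eq_zero_of_projClosureIdeal (hy0 0) fun F hF => hyI F (Ideal.mem_sup_left hF),
      fun i => ?_⟩
    rw [LaurentSeries.order_div (hy0 _) (hy0 0), hyu i]
    ring

/-- For the affine patch `Î = J + ⟨v·x − 1⟩` of the projective closure of the curve of `I`,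
nonzero integer vectors `u` arise as negated valuations of Laurent-series points of `I`
iff they arise, after the shift `u_i = val(y_0) − val(y_i)`, from Laurent-series points of `Î`
with nonnegative valuations. -/
theorem trop_patch_equiv {n : ℕ}
    (I : Ideal (MvPolynomial (Fin n) ℂ)) (hI : I.IsPrime)
    (hdim : ringKrullDim (MvPolynomial (Fin n) ℂ ⧸ I) = 1)
    (v : Fin (n + 1) → ℂ) (hv : ∀ i, v i ≠ 0)
    (hpatch : PatchCond (projClosureIdeal I) v)
    (Ihat : Ideal (MvPolynomial (Fin (n + 1)) ℂ))
    (hIhat : Ihat = projClosureIdeal I ⊔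
      Ideal.span {(∑ i, MvPolynomial.C (v i) * X i) - 1})
    (u : Fin n → ℤ) (hu : u ≠ 0) :
    (∃ z : Fin n → LaurentSeries ℂ, (∀ i, z i ≠ 0) ∧
        (∀ f ∈ I, aeval z f = 0) ∧ ∀ i, -(z i).order = u i) ↔
    (∃ y : Fin (n + 1) → LaurentSeries ℂ, (∀ i, y i ≠ 0) ∧
        (∀ f ∈ Ihat, aeval y f = 0) ∧ (∀ i, 0 ≤ (y i).order) ∧
        ∀ i : Fin n, u i = (y 0).order - (y i.succ).order) :=
  trop_patch_equiv_general I v hpatch Ihat hIhat u hu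

end
end

section
/- Suppose the curve C is defined over ℝ, i.e., I is generated by real polynomials. Let v ∈ (ℝ*)^{n+1} satisfy the patch condition for J, and set Î = J + ⟨v_0 x_0 + … + v_n x_n − 1⟩. Let K = ℝ((t)). Then for every nonzero u ∈ ℤ^n the following are equivalent: (a) there exists z ∈ (K*)^n with f(z) = 0 for all real f ∈ I and −val(z_i) = u_i for all i = 1,…,n; (b) there exists y ∈ (K*)^{n+1} with f(y) = 0 for all real f ∈ Î, val(y_i) ≥ 0 for all i = 0,…,n, and u_i = val(y_0) − val(y_i) for all i = 1,…,n. -/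
open MvPolynomial
open scoped Classical

noncomputable section

/-!
Given `z`, put `w = (1, z)` and let `m = min val wᵢ`. The generators of `J` vanish at `w` and,
being homogeneous, at `t⁻ᵐ w`, whose entries are power series; taking constant terms, the
leading coefficients `a = coeff_m w` form a nonzero common zero of `J`. One of its entries
vanishes: `a₀` if `m < 0 = val w₀`, and `a_{i+1}` for some `i` with `uᵢ ≠ 0` if `m = 0`. The
patch condition therefore says `v · a ≠ 0`, i.e. `s = v · w` has valuation exactly `m`, and
`y = w / s` is the required point of the patch, with `val yᵢ = val wᵢ - m ≥ 0`.
Conversely `zᵢ = y_{i+1} / y₀` works because the homogenization of every `f ∈ I` lies in `J`.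
-/

namespace HahnSeries

section MapRingHom

variable {Γ R S : Type*} [AddCommMonoid Γ] [PartialOrder Γ] [IsOrderedCancelAddMonoid Γ]
  [CommRing R] [CommRing S] (f : R →+* S)

def mapRingHom : HahnSeries Γ R →+* HahnSeries Γ S where
  toFun x := x.map f
  map_zero' := HahnSeries.map_zero (f : ZeroHom R S)
  map_one' := by rw [← C_one, map_C, f.map_one, C_one]
  map_add' _ _ := by ext; simp
  map_mul' _ _ := HahnSeries.map_mul (f : R →ₙ+* S)

@[simp]
lemma coeff_mapRingHom (x : HahnSeries Γ R) (g : Γ) : (mapRingHom f x).coeff g = f (x.coeff g) :=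
  rfl

lemma mapRingHom_injective (hf : Function.Injective f) :
    Function.Injective (mapRingHom f : HahnSeries Γ R →+* HahnSeries Γ S) :=
  fun _ _ h => HahnSeries.ext <| funext fun g => hf <| congrArg (coeff · g) h

end MapRingHom

lemma order_eq_of_coeff_ne_zero {Γ R : Type*} [LinearOrder Γ] [Zero Γ] [Semiring R]
    {x : HahnSeries Γ R} {m : Γ} (hm : x.coeff m ≠ 0) (hlt : ∀ k < m, x.coeff k = 0) :
    x.order = m :=
  le_antisymm (order_le_of_coeff_ne_zero hm)
    ((le_order_iff_forall (ne_of_apply_ne (coeff · m) hm)).mpr hlt)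

end HahnSeries

namespace LaurentSeries

open HahnSeries

section CommRing

variable {R : Type*} [CommRing R]

lemma exists_ofPowerSeries_eq_s6 {x : LaurentSeries R} (hx : ∀ k < 0, x.coeff k = 0) :
    ∃ p : PowerSeries R, ofPowerSeries ℤ R p = x := by
  rcases eq_or_ne x 0 with rfl | hx0
  · exact ⟨0, map_zero _⟩
  have : 0 ≤ x.order := (le_order_iff_forall hx0).mpr hx
  exact ⟨PowerSeries.X ^ x.order.toNat * x.powerSeriesPart,
    X_order_mul_powerSeriesPart (Int.toNat_of_nonneg this)⟩

lemma coeff_zero_aeval {σ : Type*} {x : σ → LaurentSeries R}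
    (hx : ∀ i, ∀ k < 0, (x i).coeff k = 0) (F : MvPolynomial σ R) :
    (aeval x F).coeff 0 = eval (fun i => (x i).coeff 0) F := by
  choose p hp using fun i => exists_ofPowerSeries_eq_s6 (hx i)
  have hcoeff (q : PowerSeries R) :
      (ofPowerSeries ℤ R q).coeff 0 = PowerSeries.constantCoeff q := by
    simpa using ofPowerSeries_apply_coeff (Γ := ℤ) q 0
  have hx' : x = fun i => ofPowerSeries ℤ R (p i) := funext fun i => (hp i).symm
  have hlift : aeval x F = ofPowerSeries ℤ R (aeval p F) := by
    rw [map_aeval, hx']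
    exact congrArg (eval₂Hom · _ F)
      (RingHom.ext fun r => (algebraMap_apply' (R := R) (Γ := ℤ) r).symm)
  rw [hlift, hcoeff, map_aeval, hx']
  simp only [hcoeff]
  exact congrArg (eval₂Hom · _ F) (RingHom.ext fun r => PowerSeries.constantCoeff_C r)

lemma coeff_zero_aeval_single_mul {σ : Type*} {x : σ → LaurentSeries R} {m : ℤ}
    (hx : ∀ i, ∀ k < m, (x i).coeff k = 0) (F : MvPolynomial σ R) :
    (aeval (fun i => single (-m) 1 * x i) F).coeff 0 = eval (fun i => (x i).coeff m) F := by
  have hshift (i : σ) (k : ℤ) : (single (-m) (1 : R) * x i).coeff k = (x i).coeff (k + m) := by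
    simpa using coeff_single_mul_add (r := (1 : R)) (x := x i) (a := k + m) (b := -m)
  rw [coeff_zero_aeval fun i k hk => by rw [hshift]; exact hx i _ (by omega)]
  simp only [hshift, zero_add]

lemma coeff_algebraMap_mul (r : R) (x : LaurentSeries R) (k : ℤ) :
    (algebraMap R (LaurentSeries R) r * x).coeff k = r * x.coeff k := by
  rw [algebraMap_apply', PowerSeries.algebraMap_eq, ofPowerSeries_C, HahnSeries.C_apply,
    coeff_single_zero_mul]

end CommRing

section Complexification

/-! The algebra structure of `LaurentSeries R` comes from `PowerSeries R` and is not
definitionally that of `HahnSeries ℤ R`, so the following are stated for Laurent series. -/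

variable {R S : Type*} [CommRing R] [CommRing S] {f : R →+* S}

variable (f) in
lemma mapRingHom_comp_algebraMap :
    (mapRingHom f).comp (algebraMap R (LaurentSeries R)) = (algebraMap S _).comp f :=
  RingHom.ext fun r => by
    simp only [RingHom.comp_apply, algebraMap_apply', PowerSeries.algebraMap_eq, ofPowerSeries_C]
    exact HahnSeries.map_C r f

variable (f) in
lemma aeval_comp_mapRingHom {σ : Type*} (x : σ → LaurentSeries R) (g : MvPolynomial σ R) :
    aeval (mapRingHom f ∘ x) (MvPolynomial.map f g) = mapRingHom f (aeval x g) := by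
  rw [aeval_def, eval₂_map, aeval_def, eval₂_comp_left, ← mapRingHom_comp_algebraMap]

lemma le_ker_aeval_mapRingHom {σ : Type*} {I : Ideal (MvPolynomial σ S)}
    {T : Set (MvPolynomial σ R)} (hI : I = Ideal.span (MvPolynomial.map f '' T))
    {x : σ → LaurentSeries R} (hx : ∀ g, MvPolynomial.map f g ∈ I → aeval x g = 0) :
    I ≤ RingHom.ker (aeval (mapRingHom f ∘ x)) := by
  conv_lhs => rw [hI]
  refine Ideal.span_le.mpr ?_
  rintro _ ⟨g, hg, rfl⟩
  rw [SetLike.mem_coe, RingHom.mem_ker, aeval_comp_mapRingHom,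
    hx g (hI ▸ Ideal.subset_span ⟨g, hg, rfl⟩), map_zero]

lemma aeval_eq_zero_of_le_ker_aeval_mapRingHom (hf : Function.Injective f) {σ : Type*}
    {J : Ideal (MvPolynomial σ S)} {x : σ → LaurentSeries R}
    (hJ : J ≤ RingHom.ker (aeval (mapRingHom f ∘ x))) {g : MvPolynomial σ R}
    (hg : MvPolynomial.map f g ∈ J) : aeval x g = 0 :=
  mapRingHom_injective f hf <| by rw [map_zero, ← aeval_comp_mapRingHom]; exact hJ hg

end Complexification

lemma order_mul_inv {K : Type*} [Field K] {x y : LaurentSeries K} (hx : x ≠ 0) (hy : y ≠ 0) :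
    (x * y⁻¹).order = x.order - y.order := by
  have := order_mul (mul_ne_zero hx (inv_ne_zero hy)) hy
  rw [inv_mul_cancel_right₀ hy] at this
  omega

end LaurentSeries

namespace MvPolynomial

variable {R S A : Type*} [CommRing R] [CommRing S] [CommRing A] [Algebra R A]

lemma IsHomogeneous.aeval_const_mul {σ : Type*} {F : MvPolynomial σ R} {d : ℕ}
    (hF : F.IsHomogeneous d) (c : A) (x : σ → A) :
    MvPolynomial.aeval (fun i => c * x i) F = c ^ d * MvPolynomial.aeval x F := by
  conv_lhs => rw [F.as_sum]
  conv_rhs => rw [F.as_sum]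
  simp only [map_sum, Finset.mul_sum, aeval_monomial, mul_pow, Finsupp.prod_mul]
  refine Finset.sum_congr rfl fun μ hμ => ?_
  rw [Finsupp.prod, Finset.prod_pow_eq_pow_sum, ← hF.degree_eq_sum_deg_support hμ]
  ring

lemma homogeneousComponent_map (f : R →+* S) {σ : Type*} (k : ℕ) (g : MvPolynomial σ R) :
    homogeneousComponent k (map f g) = map f (homogeneousComponent k g) := by
  ext μ
  simp only [coeff_homogeneousComponent, coeff_map]
  split_ifs <;> simp

variable {n : ℕ}

lemma aeval_cons_one (F : MvPolynomial (Fin (n + 1)) R) (x : Fin n → A) :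
    aeval (Fin.cons 1 x : Fin (n + 1) → A) F =
      aeval x (aeval (Fin.cons 1 X : Fin (n + 1) → MvPolynomial (Fin n) R) F) := by
  rw [comp_aeval_apply]
  congr 2
  funext i
  refine Fin.cases ?_ (fun i => ?_) i <;> simp

def homogenize (g : MvPolynomial (Fin n) R) : MvPolynomial (Fin (n + 1)) R :=
  ∑ k ∈ Finset.range (g.totalDegree + 1),
    X 0 ^ (g.totalDegree - k) * rename Fin.succ (homogeneousComponent k g)

lemma isHomogeneous_homogenize (g : MvPolynomial (Fin n) R) :
    g.homogenize.IsHomogeneous g.totalDegree := by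
  refine IsHomogeneous.sum _ _ _ fun k hk => ?_
  have hk : k ≤ g.totalDegree := Nat.lt_succ_iff.mp (Finset.mem_range.mp hk)
  simpa [Nat.sub_add_cancel hk] using
    (isHomogeneous_X_pow (0 : Fin (n + 1)) (g.totalDegree - k)).mul
      ((homogeneousComponent_isHomogeneous k g).rename_isHomogeneous (f := Fin.succ))

lemma aeval_homogenize (g : MvPolynomial (Fin n) R) (c : A) (x : Fin n → A) :
    aeval (Fin.cons c fun i => c * x i) g.homogenize = c ^ g.totalDegree * aeval x g := by
  conv_rhs => arg 2; rw [← sum_homogeneousComponent g]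
  simp only [homogenize, map_sum, map_mul, map_pow, aeval_X, aeval_rename, Finset.mul_sum,
    Fin.cons_zero, Function.comp_def, Fin.cons_succ]
  refine Finset.sum_congr rfl fun k hk => ?_
  have hk : k ≤ g.totalDegree := Nat.lt_succ_iff.mp (Finset.mem_range.mp hk)
  rw [(homogeneousComponent_isHomogeneous k g).aeval_const_mul, ← mul_assoc, ← pow_add,
    Nat.sub_add_cancel hk]

lemma aeval_cons_one_X_homogenize (g : MvPolynomial (Fin n) R) :
    aeval (Fin.cons 1 X) g.homogenize = g := by
  simpa using aeval_homogenize g (1 : MvPolynomial (Fin n) R) X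

lemma map_homogenize {f : R →+* S} (hf : Function.Injective f) (g : MvPolynomial (Fin n) R) :
    map f g.homogenize = (map f g).homogenize := by
  have : (map f g).totalDegree = g.totalDegree := by
    simp [totalDegree, support_map_of_injective _ hf]
  simp [homogenize, this, map_rename, homogeneousComponent_map]

end MvPolynomial

section ProjectiveClosure

variable {n : ℕ} {I : Ideal (MvPolynomial (Fin n) ℂ)}

lemma homogenize_mem_projClosureIdeal {g : MvPolynomial (Fin n) ℂ} (hg : g ∈ I) :
    g.homogenize ∈ projClosureIdeal I :=
  Ideal.subset_span ⟨⟨_, isHomogeneous_homogenize g⟩, by rwa [aeval_cons_one_X_homogenize]⟩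

lemma projClosureIdeal_le_ker_aeval {A : Type*} [CommRing A] [Algebra ℂ A] {x : Fin n → A}
    (hx : I ≤ RingHom.ker (aeval x)) (c : A) :
    projClosureIdeal I ≤
      RingHom.ker (aeval fun i => c * (Fin.cons 1 x : Fin (n + 1) → A) i) := by
  refine Ideal.span_le.mpr ?_
  rintro F ⟨⟨d, hF⟩, hFI⟩
  rw [SetLike.mem_coe, RingHom.mem_ker, hF.aeval_const_mul, aeval_cons_one,
    RingHom.mem_ker.mp (hx hFI), mul_zero]

end ProjectiveClosure

section RealPoints

open HahnSeries LaurentSeries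

variable {n : ℕ} {I : Ideal (MvPolynomial (Fin n) ℂ)} {v : Fin (n + 1) → ℝ}

local notation "toℂ" => HahnSeries.mapRingHom (Γ := ℤ) (algebraMap ℝ ℂ)

lemma order_sum_mul_eq_of_patchCond (hpatch : PatchCond (projClosureIdeal I) fun i => (v i : ℂ))
    {w : Fin (n + 1) → LaurentSeries ℝ} {m : ℤ} (hm : ∀ i, ∀ k < m, (w i).coeff k = 0)
    {i₀ j : Fin (n + 1)} (hi₀ : (w i₀).coeff m ≠ 0) (hj : (w j).coeff m = 0)
    (hJ : projClosureIdeal I ≤ RingHom.ker (aeval fun i => single (-m) 1 * toℂ (w i))) :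
    ∑ i, algebraMap ℝ (LaurentSeries ℝ) (v i) * w i ≠ 0 ∧
      (∑ i, algebraMap ℝ (LaurentSeries ℝ) (v i) * w i).order = m := by
  set s := ∑ i, algebraMap ℝ (LaurentSeries ℝ) (v i) * w i
  set a : Fin (n + 1) → ℂ := fun i => ((w i).coeff m : ℂ)
  have ha : ∀ g ∈ projClosureIdeal I, eval a g = 0 := fun g hg => by
    have := coeff_zero_aeval_single_mul (x := fun i => toℂ (w i)) (m := m)
      (fun i k hk => by simp [hm i k hk]) g
    rw [RingHom.mem_ker.mp (hJ hg)] at this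
    simpa [a] using this.symm
  have hsum :=
    hpatch a (fun h => hi₀ (by simpa [a] using congrFun h i₀)) ha ⟨j, by simp [a, hj]⟩
  have hcoeff (k : ℤ) : s.coeff k = ∑ i, v i * (w i).coeff k := by
    simp [s, HahnSeries.coeff_sum, coeff_algebraMap_mul]
  have hm_ne : s.coeff m ≠ 0 := by
    rw [hcoeff]
    exact fun h => hsum (by simpa [a] using congrArg (algebraMap ℝ ℂ) h)
  exact ⟨ne_of_apply_ne (HahnSeries.coeff · m) hm_ne,
    order_eq_of_coeff_ne_zero hm_ne fun k hk => by simp [hcoeff, hm _ k hk]⟩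

lemma exists_patch_point_of_point (hpatch : PatchCond (projClosureIdeal I) fun i => (v i : ℂ))
    {z : Fin n → LaurentSeries ℝ} (hz0 : ∀ i, z i ≠ 0)
    (hzI : I ≤ RingHom.ker (aeval (toℂ ∘ z)))
    {i : Fin n} (hi : (z i).order ≠ 0) :
    ∃ y : Fin (n + 1) → LaurentSeries ℝ, (∀ j, y j ≠ 0) ∧
      projClosureIdeal I ⊔ Ideal.span {∑ j, C (v j : ℂ) * X j - 1} ≤
        RingHom.ker (aeval (toℂ ∘ y)) ∧
      (∀ j, 0 ≤ (y j).order) ∧ ∀ j, (y 0).order - (y j.succ).order = -(z j).order := by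
  set w : Fin (n + 1) → LaurentSeries ℝ := Fin.cons 1 z
  have hw0 (j : Fin (n + 1)) : w j ≠ 0 := Fin.cases (by simp [w]) (by simpa [w] using hz0) j
  have hJ (c : LaurentSeries ℂ) :
      projClosureIdeal I ≤ RingHom.ker (aeval fun j => c * toℂ (w j)) := by
    have h := projClosureIdeal_le_ker_aeval hzI c
    rwa [← map_one toℂ, ← Fin.comp_cons] at h
  obtain ⟨i₀, hi₀⟩ := Finite.exists_min fun j => (w j).order
  set m := (w i₀).order
  have hw_zero : (w 0).order = 0 := by simp [w]
  have hw_succ : (w i.succ).order = (z i).order := by simp [w]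
  obtain ⟨j, hj⟩ : ∃ j, m < (w j).order := by
    rcases lt_or_ge m 0 with h | h
    · exact ⟨0, hw_zero ▸ h⟩
    · exact ⟨i.succ, by have := hi₀ 0; have := hi₀ i.succ; omega⟩
  set s := ∑ j, algebraMap ℝ (LaurentSeries ℝ) (v j) * w j with hs
  obtain ⟨hs0, hsm⟩ : s ≠ 0 ∧ s.order = m :=
    order_sum_mul_eq_of_patchCond hpatch
      (fun j k hk => coeff_eq_zero_of_lt_order (hk.trans_le (hi₀ j)))
      (mt coeff_order_eq_zero.mp (hw0 i₀)) (coeff_eq_zero_of_lt_order hj) (hJ _)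
  refine ⟨fun j => w j * s⁻¹, fun j => mul_ne_zero (hw0 j) (inv_ne_zero hs0), sup_le ?_ ?_,
    fun j => ?_, fun j => ?_⟩
  · convert hJ (toℂ s⁻¹) using 4 with j
    simp [mul_comm]
  · have hℓ : (∑ j, C (v j : ℂ) * X j - 1 : MvPolynomial (Fin (n + 1)) ℂ) =
        MvPolynomial.map (algebraMap ℝ ℂ) (∑ j, C (v j) * X j - 1) := by
      simp
    have hy : aeval (fun j => w j * s⁻¹) (∑ j, C (v j) * X j - 1) = 0 := by
      simp only [map_sub, map_sum, map_mul, aeval_C, aeval_X, map_one, ← mul_assoc,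
        ← Finset.sum_mul, ← hs, mul_inv_cancel₀ hs0, sub_self]
    rw [Ideal.span_le, Set.singleton_subset_iff, SetLike.mem_coe, RingHom.mem_ker, hℓ,
      aeval_comp_mapRingHom, hy, map_zero]
  · rw [order_mul_inv (hw0 j) hs0, hsm]
    linarith [hi₀ j]
  · rw [order_mul_inv (hw0 0) hs0, order_mul_inv (hw0 j.succ) hs0, hw_zero]
    simp only [w, Fin.cons_succ]
    ring

lemma aeval_eq_zero_of_patch_point {K : Type*} [Field K] [Algebra ℝ K] {y : Fin (n + 1) → K}
    (hy0 : y 0 ≠ 0)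
    (hy : ∀ g : MvPolynomial (Fin (n + 1)) ℝ,
      MvPolynomial.map (algebraMap ℝ ℂ) g ∈ projClosureIdeal I → aeval y g = 0)
    {g : MvPolynomial (Fin n) ℝ} (hg : MvPolynomial.map (algebraMap ℝ ℂ) g ∈ I) :
    aeval (fun i => y i.succ * (y 0)⁻¹) g = 0 := by
  have hmem : MvPolynomial.map (algebraMap ℝ ℂ) g.homogenize ∈ projClosureIdeal I := by
    rw [map_homogenize (algebraMap ℝ ℂ).injective]
    exact homogenize_mem_projClosureIdeal hg
  have hy' : y = Fin.cons (y 0) fun i => y 0 * (y i.succ * (y 0)⁻¹) := by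
    funext j
    refine Fin.cases rfl (fun i => ?_) j
    rw [Fin.cons_succ]
    field_simp
  have h := hy _ hmem
  rw [hy', aeval_homogenize] at h
  exact (mul_eq_zero.mp h).resolve_left (pow_ne_zero _ hy0)

end RealPoints

open LaurentSeries

theorem trop_patch_equiv_real_general {n : ℕ}
    (I : Ideal (MvPolynomial (Fin n) ℂ))
    (hreal : ∃ S : Set (MvPolynomial (Fin n) ℝ),
      I = Ideal.span (MvPolynomial.map (algebraMap ℝ ℂ) '' S))
    (v : Fin (n + 1) → ℝ)
    (hpatch : PatchCond (projClosureIdeal I) (fun i => (v i : ℂ)))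
    (Ihat : Ideal (MvPolynomial (Fin (n + 1)) ℂ))
    (hIhat : Ihat = projClosureIdeal I ⊔
      Ideal.span {(∑ i, MvPolynomial.C ((v i : ℂ)) * X i) - 1})
    (u : Fin n → ℤ) (hu : u ≠ 0) :
    (∃ z : Fin n → LaurentSeries ℝ, (∀ i, z i ≠ 0) ∧
        (∀ g : MvPolynomial (Fin n) ℝ,
          MvPolynomial.map (algebraMap ℝ ℂ) g ∈ I → aeval z g = 0) ∧
        ∀ i, -(z i).order = u i) ↔
    (∃ y : Fin (n + 1) → LaurentSeries ℝ, (∀ i, y i ≠ 0) ∧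
        (∀ g : MvPolynomial (Fin (n + 1)) ℝ,
          MvPolynomial.map (algebraMap ℝ ℂ) g ∈ Ihat → aeval y g = 0) ∧
        (∀ i, 0 ≤ (y i).order) ∧
        ∀ i : Fin n, u i = (y 0).order - (y i.succ).order) := by
  obtain ⟨S, hS⟩ := hreal
  subst hIhat
  constructor
  · rintro ⟨z, hz0, hzI, hzu⟩
    obtain ⟨i, hi⟩ : ∃ i, u i ≠ 0 := by
      by_contra! h
      exact hu (funext h)
    obtain ⟨y, hy0, hyI, hy_nonneg, hy_order⟩ := exists_patch_point_of_point hpatch hz0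
      (le_ker_aeval_mapRingHom hS hzI) (i := i) (by rw [← hzu i] at hi; simpa using hi)
    exact ⟨y, hy0, fun g => aeval_eq_zero_of_le_ker_aeval_mapRingHom
      (algebraMap ℝ ℂ).injective hyI, hy_nonneg, fun j => by rw [hy_order, hzu]⟩
  · rintro ⟨y, hy0, hyI, -, hyu⟩
    refine ⟨fun i => y i.succ * (y 0)⁻¹, fun i => mul_ne_zero (hy0 _) (inv_ne_zero (hy0 0)),
      fun g => aeval_eq_zero_of_patch_point (hy0 0)
        fun g hg => hyI g (Ideal.mem_sup_left hg), fun i => ?_⟩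
    rw [order_mul_inv (hy0 _) (hy0 0), hyu]
    ring

/-- Real version of the patch equivalence: for a curve defined over `ℝ`, real vectors of
nonzero real Laurent series solving the real polynomials in `I` with negated valuation `u`
correspond to real Laurent-series solutions of the real polynomials of the affine patch
`Î = J + ⟨v·x − 1⟩` with nonnegative valuations and `u_i = val(y_0) − val(y_i)`. -/
theorem trop_patch_equiv_real {n : ℕ}
    (I : Ideal (MvPolynomial (Fin n) ℂ)) (hI : I.IsPrime)
    (hdim : ringKrullDim (MvPolynomial (Fin n) ℂ ⧸ I) = 1)
    (hreal : ∃ S : Set (MvPolynomial (Fin n) ℝ),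
      I = Ideal.span (MvPolynomial.map (algebraMap ℝ ℂ) '' S))
    (v : Fin (n + 1) → ℝ) (hv : ∀ i, v i ≠ 0)
    (hpatch : PatchCond (projClosureIdeal I) (fun i => (v i : ℂ)))
    (Ihat : Ideal (MvPolynomial (Fin (n + 1)) ℂ))
    (hIhat : Ihat = projClosureIdeal I ⊔
      Ideal.span {(∑ i, MvPolynomial.C ((v i : ℂ)) * X i) - 1})
    (u : Fin n → ℤ) (hu : u ≠ 0) :
    (∃ z : Fin n → LaurentSeries ℝ, (∀ i, z i ≠ 0) ∧
        (∀ g : MvPolynomial (Fin n) ℝ,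
          MvPolynomial.map (algebraMap ℝ ℂ) g ∈ I → aeval z g = 0) ∧
        ∀ i, -(z i).order = u i) ↔
    (∃ y : Fin (n + 1) → LaurentSeries ℝ, (∀ i, y i ≠ 0) ∧
        (∀ g : MvPolynomial (Fin (n + 1)) ℝ,
          MvPolynomial.map (algebraMap ℝ ℂ) g ∈ Ihat → aeval y g = 0) ∧
        (∀ i, 0 ≤ (y i).order) ∧
        ∀ i : Fin n, u i = (y 0).order - (y i.succ).order) :=
  trop_patch_equiv_real_general I hreal v hpatch Ihat hIhat u hu
end
end

section
/- Let k be a field, let I ⊆ k[x_1,…,x_n] be an ideal, and let K = k((t)). Suppose y ∈ (K*)^n satisfies f(y) = 0 for all f ∈ I. Set w = −val(y) ∈ ℤ^n and a = coeff(y) ∈ (k*)^n. Then In_w(f)(a) = 0 for every nonzero f ∈ I. In particular, the initial ideal In_w(I) contains no monomial x^α. -/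
open MvPolynomial
open scoped Classical

noncomputable section

/-! With `v(α) = ∑ αᵢ val(yᵢ)` we have `w · α = -v(α)`, and the monomial `c x^α` evaluated at `y`
is a Laurent series of order `v(α)` with leading coefficient `c a^α`. If `d` is the least `v(α)` over
the support of `f`, the `t^d`-coefficient of `f(y) = 0` is the sum of the `c_α a^α` with `v(α) = d`,
which is `In_w(f)(a)`. So `In_w(I)` lies in the kernel of evaluation at `a`, and no monomial does,
as all `aᵢ ≠ 0`. -/

namespace HahnSeries

variable {Γ R : Type*} [AddCommMonoid Γ] [LinearOrder Γ] [IsOrderedCancelAddMonoid Γ]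
  [CommRing R] [IsDomain R]

def leadingCoeffHom : R⟦Γ⟧ →*₀ R where
  toFun := leadingCoeff
  map_zero' := leadingCoeff_zero
  map_one' := leadingCoeff_one
  map_mul' x y := leadingCoeff_mul x y

theorem order_prod {ι : Type*} {s : Finset ι} {x : ι → R⟦Γ⟧} (hx : ∀ i ∈ s, x i ≠ 0) :
    (∏ i ∈ s, x i).order = ∑ i ∈ s, (x i).order := by
  induction s using Finset.induction_on with
  | empty => simp
  | insert j s hj ih =>
    simp only [Finset.forall_mem_insert] at hx
    rw [Finset.prod_insert hj, Finset.sum_insert hj,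
      order_mul hx.1 (Finset.prod_ne_zero_iff.mpr hx.2), ih hx.2]

variable {σ : Type*} {y : σ → R⟦Γ⟧}

theorem order_finsuppProd_pow (hy : ∀ i, y i ≠ 0) (α : σ →₀ ℕ) :
    (α.prod fun i e => y i ^ e).order = Finsupp.weight (fun i => (y i).order) α := by
  rw [Finsupp.prod, order_prod fun i _ => pow_ne_zero _ (hy i), Finsupp.weight_apply, Finsupp.sum]
  simp only [order_pow]

theorem leadingCoeff_finsuppProd_pow (α : σ →₀ ℕ) :
    (α.prod fun i e => y i ^ e).leadingCoeff = α.prod fun i e => (y i).leadingCoeff ^ e :=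
  map_finsuppProd leadingCoeffHom α (fun i e => y i ^ e) |>.trans <| by
    simp only [map_pow]; rfl

theorem coeff_eval₂_C_of_le_weight (f : MvPolynomial σ R) (hy : ∀ i, y i ≠ 0) {d : Γ}
    (hd : ∀ α ∈ f.support, d ≤ Finsupp.weight (fun i => (y i).order) α) :
    (eval₂ C y f).coeff d = ∑ α ∈ f.support with Finsupp.weight (fun i => (y i).order) α = d,
      f.coeff α * α.prod fun i e => (y i).leadingCoeff ^ e := by
  conv_lhs => rw [f.as_sum, ← coe_eval₂Hom, map_sum, coeff_sum]
  rw [Finset.sum_filter]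
  refine Finset.sum_congr rfl fun α hα => ?_
  rw [coe_eval₂Hom, eval₂_monomial, C_mul_eq_smul, coeff_smul, smul_eq_mul,
    ← order_finsuppProd_pow hy α]
  split_ifs with h
  · rw [← h, ← leadingCoeff_eq, leadingCoeff_finsuppProd_pow]
  · rw [coeff_eq_zero_of_lt_order ((order_finsuppProd_pow hy α ▸ hd α hα).lt_of_ne' h), mul_zero]

end HahnSeries

section InitialForm

variable {R : Type*} {n : ℕ}

theorem wdeg_neg_intCast (u : Fin n → ℤ) (α : Fin n →₀ ℕ) :
    wdeg (fun i => -(u i : ℝ)) α = -(Finsupp.weight u α : ℝ) := by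
  rw [wdeg, Finsupp.weight_apply, Finsupp.sum_fintype _ _ (by simp)]
  push_cast
  simp [Finset.sum_neg_distrib, mul_comm]

theorem eval_initialForm [CommSemiring R] (a : Fin n → R) (w : Fin n → ℝ)
    (f : MvPolynomial (Fin n) R) :
    eval a (initialForm w f) = ∑ α ∈ f.support with ∀ β ∈ f.support, wdeg w β ≤ wdeg w α,
      f.coeff α * α.prod fun i e => a i ^ e := by
  simp only [initialForm, map_sum, eval_monomial]

theorem initialIdeal_le_ker_eval [CommRing R] {a : Fin n → R} {w : Fin n → ℝ}
    {I : Ideal (MvPolynomial (Fin n) R)}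
    (h : ∀ f ∈ I, f ≠ 0 → eval a (initialForm w f) = 0) :
    initialIdeal w I ≤ RingHom.ker (eval a) := by
  rw [initialIdeal, Ideal.span_le]
  rintro _ ⟨f, hf, rfl⟩
  obtain rfl | hf0 := eq_or_ne f 0
  · simp [initialForm]
  · exact h f hf hf0

end InitialForm

theorem eval_initialForm_eq_zero_of_aeval_eq_zero {R : Type*} [CommRing R] [IsDomain R] {n : ℕ}
    {y : Fin n → LaurentSeries R} (hy : ∀ i, y i ≠ 0) {f : MvPolynomial (Fin n) R} (hf : f ≠ 0)
    (hfy : aeval y f = 0) :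
    eval (fun i => (y i).leadingCoeff) (initialForm (fun i => -((y i).order : ℝ)) f) = 0 := by
  set v : (Fin n →₀ ℕ) →+ ℤ := Finsupp.weight fun i => (y i).order
  obtain ⟨α₀, hα₀, hmin⟩ := f.support.exists_min_image v (support_nonempty.mpr hf)
  -- `R` acts on Laurent series through `R⟦X⟧`, so `aeval` is not syntactically `eval₂ C`.
  have hC : algebraMap R (LaurentSeries R) = HahnSeries.C := by
    ext; simp [RingHom.algebraMap_toAlgebra]
  have hcoeff := HahnSeries.coeff_eval₂_C_of_le_weight f hy hmin
  rw [← hC, ← aeval_def, hfy, HahnSeries.coeff_zero] at hcoeff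
  rw [eval_initialForm, hcoeff]
  refine Finset.sum_congr (Finset.filter_congr fun α hα => ?_) fun _ _ => rfl
  simp only [wdeg_neg_intCast, neg_le_neg_iff, Int.cast_le]
  exact ⟨fun h => le_antisymm (h α₀ hα₀) (hmin α hα), fun h β hβ => h ▸ hmin β hβ⟩

/-- If `y` is a tuple of nonzero Laurent series solving every `f ∈ I`, then with
`w = −val(y)` and `a = coeff(y)`, every nonzero `f ∈ I` satisfies `In_w(f)(a) = 0`;
in particular `In_w(I)` contains no monomial. -/
theorem initialIdeal_no_monomial {k : Type*} [Field k] {n : ℕ}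
    (I : Ideal (MvPolynomial (Fin n) k))
    (y : Fin n → LaurentSeries k) (hy : ∀ i, y i ≠ 0)
    (hsol : ∀ f ∈ I, aeval y f = 0) :
    (∀ f ∈ I, f ≠ 0 →
        eval (fun i => (y i).coeff (y i).order)
          (initialForm (fun i => -((y i).order : ℝ)) f) = 0) ∧
    ∀ α : Fin n →₀ ℕ,
      monomial α (1 : k) ∉ initialIdeal (fun i => -((y i).order : ℝ)) I := by
  simp only [← HahnSeries.leadingCoeff_eq]
  have hinit : ∀ f ∈ I, f ≠ 0 → eval (fun i => (y i).leadingCoeff)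
      (initialForm (fun i => -((y i).order : ℝ)) f) = 0 :=
    fun f hf hf0 => eval_initialForm_eq_zero_of_aeval_eq_zero hy hf0 (hsol f hf)
  refine ⟨hinit, fun α hα => ?_⟩
  have hzero := initialIdeal_le_ker_eval hinit hα
  rw [RingHom.mem_ker, eval_monomial, one_mul] at hzero
  exact Finset.prod_ne_zero_iff.mpr
    (fun i _ => pow_ne_zero _ (HahnSeries.leadingCoeff_ne_zero.mpr (hy i))) hzero

end
end

section
/- There is no pair of nonzero formal Laurent series x, y ∈ ℝ((t)) satisfying x^6 − x^3 + y^2 = 0 with val(x) < 0. In particular, there is no zero of x^6 − x^3 + y^2 over ℝ((t)) whose negated valuation vector (−val(x), −val(y)) lies on the ray spanned by (1,3). -/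
/-! Order `ℝ((t))` lexicographically, i.e. by the sign of the leading coefficient; this makes it
an ordered field in which a series of negative valuation is infinitely large, so `1 < |x|`.
Then `x³ ≤ |x|³ < |x|⁶ = x⁶`, and `x⁶ - x³ + y²` is strictly positive. -/

open HahnSeries

theorem pow_lt_pow_of_one_lt_abs_of_even {K : Type*} [Ring K] [LinearOrder K]
    [IsStrictOrderedRing K] {a : K} {m n : ℕ} (hn : Even n) (hmn : m < n) (ha : 1 < |a|) :
    a ^ m < a ^ n :=
  calc a ^ m ≤ |a| ^ m := (le_abs_self _).trans (abs_pow a m).le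
    _ < |a| ^ n := pow_lt_pow_right₀ ha hmn
    _ = a ^ n := hn.pow_abs a

namespace HahnSeries

variable {Γ R : Type*} [LinearOrder Γ] [AddCommMonoid Γ] [IsOrderedCancelAddMonoid Γ]
  [Ring R] [LinearOrder R] [IsStrictOrderedRing R]

theorem one_lt_abs_toLex_of_order_neg {x : R⟦Γ⟧} (h : x.order < 0) : 1 < |toLex x| := by
  have hx : x ≠ 0 := by
    rintro rfl
    exact h.ne order_zero
  have horder : x.orderTop < (1 : R⟦Γ⟧).orderTop := by
    rw [orderTop_one, ← order_eq_orderTop_of_ne_zero hx]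
    exact_mod_cast h
  simpa using abs_lt_abs_of_orderTop_ofLex (x := toLex 1) (y := toLex x) horder

theorem pow_six_sub_pow_three_add_sq_ne_zero {x : R⟦Γ⟧} (hx : x.order < 0) (y : R⟦Γ⟧) :
    x ^ 6 - x ^ 3 + y ^ 2 ≠ 0 := by
  have hpos : 0 < toLex x ^ 6 - toLex x ^ 3 + toLex y ^ 2 :=
    add_pos_of_pos_of_nonneg
      (sub_pos.mpr (pow_lt_pow_of_one_lt_abs_of_even (by decide) (by decide)
        (one_lt_abs_toLex_of_order_neg hx)))
      (sq_nonneg _)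
  exact hpos.ne'

end HahnSeries

/-- No pair of nonzero real Laurent series with `val(x) < 0` solves `x⁶ − x³ + y² = 0`;
in particular no solution has negated valuation vector on the ray spanned by `(1,3)`. -/
theorem sextic_no_real_branch :
    (¬ ∃ x y : LaurentSeries ℝ, x ≠ 0 ∧ y ≠ 0 ∧
        x ^ 6 - x ^ 3 + y ^ 2 = 0 ∧ x.order < 0) ∧
    ¬ ∃ x y : LaurentSeries ℝ, x ≠ 0 ∧ y ≠ 0 ∧
        x ^ 6 - x ^ 3 + y ^ 2 = 0 ∧
        ∃ c : ℤ, 0 < c ∧ -x.order = c ∧ -y.order = 3 * c := by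
  have no_branch : ¬ ∃ x y : LaurentSeries ℝ, x ≠ 0 ∧ y ≠ 0 ∧
      x ^ 6 - x ^ 3 + y ^ 2 = 0 ∧ x.order < 0 := by
    rintro ⟨x, y, -, -, heq, hord⟩
    exact pow_six_sub_pow_three_add_sq_ne_zero hord y heq
  refine ⟨no_branch, ?_⟩
  rintro ⟨x, y, hx, hy, heq, c, hc, hxc, -⟩
  exact no_branch ⟨x, y, hx, hy, heq, by omega⟩
end

section
/- Let f = x^4 + y^4 − (x − y)^2(x + y) ∈ ℝ[x,y]. For each ε ∈ {1, −1}, there exists a formal power series x ∈ ℝ[[t]] with constant coefficient 1 and coefficient of t equal to −ε such that f(x, εt) = 0 in ℝ[[t]]. Consequently the real tropical variety of f contains the direction (0,−1) with sign patterns (+,+) and (+,−). -/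
/-!
With `y = εt`, `f` is a monic quartic in `x` over `ℝ⟦t⟧` whose reduction modulo `t` is
`x⁴ − x³ = x³(x − 1)`. Its root `1` is simple, so Hensel's lemma in the `t`-adically complete ring
`ℝ⟦t⟧` lifts it to a root `x = 1 + ⋯`; the coefficient of `t` in `f(x, εt) = 0` then reads
`coeff₁ x + ε = 0`.
-/

open Polynomial

section Quartic

variable {S : Type*} [CommRing S]

noncomputable def quarticAt (c : S) : S[X] := X ^ 4 + C c ^ 4 - (X - C c) ^ 2 * (X + C c)

@[simp]
theorem eval_quarticAt (c a : S) :
    (quarticAt c).eval a = a ^ 4 + c ^ 4 - (a - c) ^ 2 * (a + c) := by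
  simp [quarticAt]

theorem map_quarticAt {T : Type*} [CommRing T] (g : S →+* T) (c : S) :
    (quarticAt c).map g = quarticAt (g c) := by
  simp [quarticAt]

theorem monic_quarticAt (c : S) : (quarticAt c).Monic := by
  unfold quarticAt
  monicity!

theorem quarticAt_zero : quarticAt (0 : S) = X ^ 4 - X ^ 3 := by
  rw [quarticAt, map_zero]
  ring

theorem isRoot_quarticAt_zero_one : (quarticAt (0 : S)).IsRoot 1 := by
  simp [quarticAt_zero]

theorem eval_one_derivative_quarticAt_zero : (quarticAt (0 : S)).derivative.eval 1 = 1 := by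
  norm_num [quarticAt_zero]

end Quartic

namespace PowerSeries

variable {R : Type*} [CommRing R]

theorem exists_isRoot_of_map_constantCoeff {f : R⟦X⟧[X]} (hf : f.Monic) {a₀ : R}
    (hroot : (f.map constantCoeff).IsRoot a₀)
    (hsimple : IsUnit ((f.map constantCoeff).derivative.eval a₀)) :
    ∃ a : R⟦X⟧, f.IsRoot a ∧ constantCoeff a = a₀ := by
  have hres (g : R⟦X⟧[X]) : constantCoeff (g.eval (C a₀)) = (g.map constantCoeff).eval a₀ := by
    rw [eval_map, ← eval₂_at_apply, constantCoeff_C]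
  obtain ⟨a, ha, hsub⟩ := HenselianRing.is_henselian (I := Ideal.span {(X : R⟦X⟧)}) f hf (C a₀)
    (by rw [Ideal.mem_span_singleton, X_dvd_iff, hres, hroot.eq_zero])
    ((isUnit_iff_constantCoeff.mpr (by rwa [hres, ← derivative_map])).map _)
  refine ⟨a, ha, ?_⟩
  rwa [Ideal.mem_span_singleton, X_dvd_iff, map_sub, constantCoeff_C, sub_eq_zero] at hsub

theorem coeff_one_eq_neg_of_quartic_eq_zero {a c : R⟦X⟧}
    (h : a ^ 4 + c ^ 4 - (a - c) ^ 2 * (a + c) = 0) (ha : constantCoeff a = 1)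
    (hc : constantCoeff c = 0) : coeff 1 a = -coeff 1 c := by
  have h1 := congrArg (coeff 1) h
  simp only [map_sub, map_add, coeff_one_mul, coeff_one_pow, map_pow, ha, hc, map_zero] at h1
  linear_combination h1

end PowerSeries

theorem quartic_real_branches_general (ε : ℝ) :
    ∃ x : PowerSeries ℝ, PowerSeries.coeff (R := ℝ) 0 x = 1 ∧ PowerSeries.coeff (R := ℝ) 1 x = -ε ∧
      x ^ 4 + (PowerSeries.C (R := ℝ) ε * PowerSeries.X) ^ 4 -
        (x - PowerSeries.C (R := ℝ) ε * PowerSeries.X) ^ 2 *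
          (x + PowerSeries.C (R := ℝ) ε * PowerSeries.X) = 0 := by
  set c : PowerSeries ℝ := PowerSeries.C ε * PowerSeries.X
  have hc : PowerSeries.constantCoeff c = 0 := by simp [c]
  obtain ⟨x, hroot, hx⟩ := PowerSeries.exists_isRoot_of_map_constantCoeff (monic_quarticAt c)
    (by rw [map_quarticAt, hc]; exact isRoot_quarticAt_zero_one)
    (by rw [map_quarticAt, hc, eval_one_derivative_quarticAt_zero]; exact isUnit_one)
  have hf : x ^ 4 + c ^ 4 - (x - c) ^ 2 * (x + c) = 0 := by simpa using hroot
  refine ⟨x, by simpa using hx, ?_, hf⟩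
  rw [PowerSeries.coeff_one_eq_neg_of_quartic_eq_zero hf hx hc]
  simp [c]

/-- For `f = x⁴ + y⁴ − (x − y)²(x + y)` and each `ε ∈ {1, −1}`, there is a real power series
`x = 1 − ε t + …` with `f(x, εt) = 0`; hence the real tropical variety of `f` contains the
direction `(0,−1)` with sign patterns `(+,+)` and `(+,−)`. -/
theorem quartic_real_branches (ε : ℝ) (hε : ε = 1 ∨ ε = -1) :
    ∃ x : PowerSeries ℝ, PowerSeries.coeff (R := ℝ) 0 x = 1 ∧ PowerSeries.coeff (R := ℝ) 1 x = -ε ∧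
      x ^ 4 + (PowerSeries.C (R := ℝ) ε * PowerSeries.X) ^ 4 -
        (x - PowerSeries.C (R := ℝ) ε * PowerSeries.X) ^ 2 *
          (x + PowerSeries.C (R := ℝ) ε * PowerSeries.X) = 0 :=
  quartic_real_branches_general ε
end

section
/- Let f = x^4 + y^4 − (x − y)^2(x + y). For every pair of nonzero formal Laurent series x, y ∈ ℝ((t)) with f(x, y) = 0, the vector (−val(x), −val(y)) ∈ ℤ^2 is a nonnegative integer multiple of one of the vectors (0,−1), (−1,0), or (−1,−1). -/
/-! Write `v` for the valuation and `μ = min (v x) (v y)`. Over an ordered field the leading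
coefficients of two squares cannot cancel, so `v (x⁴ + y⁴) = 4μ`, whereas
`v ((x - y)² (x + y)) ≥ 3μ`, with equality when `v x ≠ v y` since then `x ± y` both have
valuation `μ`. Comparing the two sides of the equation gives `μ ≥ 0`, and `μ = 0` unless
`v x = v y`. -/

namespace HahnSeries

variable {Γ R : Type*} [AddCancelCommMonoid Γ] [LinearOrder Γ] [IsOrderedCancelAddMonoid Γ]

section Domain

variable [Ring R] [IsDomain R] {x y : R⟦Γ⟧}

theorem three_nsmul_min_le_addVal_sub_sq_mul_add :
    3 • min (addVal Γ R x) (addVal Γ R y) ≤ addVal Γ R ((x - y) ^ 2 * (x + y)) := by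
  rw [AddValuation.map_mul, AddValuation.map_pow, succ_nsmul]
  exact add_le_add (nsmul_le_nsmul_right (AddValuation.map_sub _ x y) 2)
    (AddValuation.map_add _ x y)

theorem addVal_sub_sq_mul_add_of_addVal_ne (hxy : addVal Γ R x ≠ addVal Γ R y) :
    addVal Γ R ((x - y) ^ 2 * (x + y)) = 3 • min (addVal Γ R x) (addVal Γ R y) := by
  have hsub : addVal Γ R (x - y) = min (addVal Γ R x) (addVal Γ R y) := by
    rw [sub_eq_add_neg, AddValuation.map_add_of_distinct_val _ (by rwa [AddValuation.map_neg]),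
      AddValuation.map_neg]
  rw [AddValuation.map_mul, AddValuation.map_pow, hsub,
    AddValuation.map_add_of_distinct_val _ hxy]
  exact (succ_nsmul _ 2).symm

end Domain

section OrderedField

variable [Field R] [LinearOrder R] [IsStrictOrderedRing R]

theorem coeff_sq_nonneg_of_le_orderTop (x : R⟦Γ⟧) {g : Γ}
    (hg : (g : WithTop Γ) ≤ (x ^ 2).orderTop) :
    0 ≤ (x ^ 2).coeff g := by
  rcases hg.lt_or_eq with hlt | heq
  · rw [coeff_eq_zero_of_lt_orderTop hlt]
  · have hx2 : x ^ 2 ≠ 0 := by rintro h; simp [h] at heq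
    rw [← order_eq_orderTop_of_ne_zero hx2, WithTop.coe_eq_coe] at heq
    rw [heq, ← leadingCoeff_eq, pow_two, leadingCoeff_mul]
    exact mul_self_nonneg _

theorem addVal_sq_add_sq (x y : R⟦Γ⟧) :
    addVal Γ R (x ^ 2 + y ^ 2) = 2 • min (addVal Γ R x) (addVal Γ R y) := by
  wlog hxy : addVal Γ R x ≤ addVal Γ R y generalizing x y
  · rw [add_comm, min_comm]; exact this y x (le_of_not_ge hxy)
  rcases eq_or_ne x 0 with rfl | hx
  · simp_all
  have hvy2 : 2 • addVal Γ R x ≤ addVal Γ R (y ^ 2) := by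
    rw [AddValuation.map_pow]; exact nsmul_le_nsmul_right hxy 2
  rw [min_eq_left hxy]
  refine le_antisymm ?_ ?_
  · have hcoeff : (x ^ 2 + y ^ 2).coeff (x.order + x.order) ≠ 0 := by
      have hcoeff_x2 : (x ^ 2).coeff (x.order + x.order) = x.leadingCoeff * x.leadingCoeff := by
        rw [pow_two, coeff_mul_order_add_order]
      have hcoeff_y2 : 0 ≤ (y ^ 2).coeff (x.order + x.order) := by
        refine coeff_sq_nonneg_of_le_orderTop y ?_
        rwa [← addVal_apply, WithTop.coe_add, ← two_nsmul, ← addVal_apply_of_ne hx]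
      rw [coeff_add, hcoeff_x2]
      have : 0 < x.leadingCoeff * x.leadingCoeff := mul_self_pos.mpr (leadingCoeff_ne_zero.mpr hx)
      positivity
    calc addVal Γ R (x ^ 2 + y ^ 2) ≤ ↑(x.order + x.order) := addVal_le_of_coeff_ne_zero hcoeff
      _ = 2 • addVal Γ R x := by rw [addVal_apply_of_ne hx, two_nsmul, WithTop.coe_add]
  · calc 2 • addVal Γ R x = min (addVal Γ R (x ^ 2)) (addVal Γ R (y ^ 2)) := by
          rw [AddValuation.map_pow, min_eq_left hvy2]
      _ ≤ addVal Γ R (x ^ 2 + y ^ 2) := AddValuation.map_add _ _ _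

theorem addVal_pow_four_add_pow_four (x y : R⟦Γ⟧) :
    addVal Γ R (x ^ 4 + y ^ 4) = 4 • min (addVal Γ R x) (addVal Γ R y) := by
  have h4 : ∀ z : R⟦Γ⟧, z ^ 4 = (z ^ 2) ^ 2 := fun z => by rw [← pow_mul]
  rw [h4, h4, addVal_sq_add_sq, AddValuation.map_pow, AddValuation.map_pow,
    ← (nsmul_right_mono 2).map_min, ← mul_nsmul]

theorem min_addVal_nonneg_of_quartic (h : x ^ 4 + y ^ 4 = (x - y) ^ 2 * (x + y)) :
    0 ≤ min (addVal Γ R x) (addVal Γ R y) := by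
  have hle := three_nsmul_min_le_addVal_sub_sq_mul_add (x := x) (y := y)
  rw [← h, addVal_pow_four_add_pow_four] at hle
  generalize min (addVal Γ R x) (addVal Γ R y) = μ at hle ⊢
  induction μ with
  | top => exact le_top
  | coe g =>
    rw [← WithTop.coe_nsmul, ← WithTop.coe_nsmul, WithTop.coe_le_coe, succ_nsmul _ 3,
      le_add_iff_nonneg_right] at hle
    exact WithTop.coe_nonneg.mpr hle

theorem min_addVal_eq_zero_of_quartic (h : x ^ 4 + y ^ 4 = (x - y) ^ 2 * (x + y))
    (hxy : addVal Γ R x ≠ addVal Γ R y) : min (addVal Γ R x) (addVal Γ R y) = 0 := by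
  have heq := addVal_sub_sq_mul_add_of_addVal_ne hxy
  rw [← h, addVal_pow_four_add_pow_four] at heq
  have hne : min (addVal Γ R x) (addVal Γ R y) ≠ ⊤ := by
    rw [ne_eq, min_eq_top]; rintro ⟨hx, hy⟩; exact hxy (hx.trans hy.symm)
  generalize min (addVal Γ R x) (addVal Γ R y) = μ at heq hne ⊢
  induction μ with
  | top => exact absurd rfl hne
  | coe g =>
    rw [← WithTop.coe_nsmul, ← WithTop.coe_nsmul, WithTop.coe_eq_coe, succ_nsmul _ 3,
      add_eq_left] at heq
    rw [heq, WithTop.coe_zero]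

end OrderedField

end HahnSeries

open HahnSeries

/-- Every real Laurent-series zero of `f = x⁴ + y⁴ − (x − y)²(x + y)` with nonzero coordinates
has negated valuation vector a nonnegative multiple of `(0,−1)`, `(−1,0)`, or `(−1,−1)`. -/
theorem quartic_real_trop_rays (x y : LaurentSeries ℝ) (hx : x ≠ 0) (hy : y ≠ 0)
    (h : x ^ 4 + y ^ 4 - (x - y) ^ 2 * (x + y) = 0) :
    ∃ c : ℕ, (x.order = 0 ∧ y.order = (c : ℤ)) ∨
      (x.order = (c : ℤ) ∧ y.order = 0) ∨
      (x.order = (c : ℤ) ∧ y.order = (c : ℤ)) := by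
  have hf := sub_eq_zero.mp h
  have hval : min (addVal ℤ ℝ x) (addVal ℤ ℝ y) = ↑(min x.order y.order) := by
    rw [addVal_apply_of_ne hx, addVal_apply_of_ne hy, WithTop.coe_min]
  have hmin : 0 ≤ min x.order y.order := by
    have := min_addVal_nonneg_of_quartic hf
    rw [hval] at this
    exact_mod_cast this
  by_cases hxy : x.order = y.order
  · exact ⟨x.order.toNat, Or.inr (Or.inr (by omega))⟩
  · have hzero : min x.order y.order = 0 := by
      have := min_addVal_eq_zero_of_quartic hf (by simpa [hx, hy] using hxy)
      rw [hval] at this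
      exact_mod_cast this
    rcases le_total x.order y.order with hle | hle
    · exact ⟨y.order.toNat, Or.inl (by omega)⟩
    · exact ⟨x.order.toNat, Or.inr (Or.inl (by omega))⟩
end

section
/- There exists a formal power series y ∈ ℝ[[t]] of order 3 such that t^6·y − t^2·y^3 + t^6 − y^2 = 0 in ℝ[[t]]. Consequently, the pair (x_1, x_2) = (t^2, y) is a zero of x_1^3 x_2 − x_1 x_2^3 + x_1^3 − x_2^2 over ℝ((t)) with (−val(x_1), −val(x_2)) = (−2, −3). -/
/-!
Writing `y = t³ / v`, the equation `t⁶y − t²y³ + t⁶ − y² = 0` becomes the monic cubic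
`v³ + t³v² − v − t⁵ = 0`. Modulo `t` this is `v³ − v`, which has the simple root `1`
(derivative `2`), so Hensel's lemma in the `t`-adically complete ring `R⟦t⟧` lifts it to a root
`v` with `v(0) = 1`. Then `y = t³v⁻¹` has order `3`, and the embedding `R⟦t⟧ → R⸨t⸩` preserves
orders, giving the valuations.
-/

namespace PowerSeries

theorem order_ofPowerSeries_of_order_eq {R : Type*} [Semiring R] {f : R⟦X⟧} {n : ℕ}
    (h : f.order = n) : (HahnSeries.ofPowerSeries ℤ R f).order = n := by
  obtain ⟨hn, hlt⟩ := order_eq_nat.mp h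
  have hne : HahnSeries.ofPowerSeries ℤ R f ≠ 0 := by
    intro hf
    exact hn (by simpa using congrArg (HahnSeries.coeff · (n : ℤ)) hf)
  refine le_antisymm (HahnSeries.order_le_of_coeff_ne_zero (by simpa using hn)) ?_
  refine (HahnSeries.le_order_iff_forall hne).mpr fun j hj => ?_
  rw [coeff_coe]
  split_ifs with hj0
  · rfl
  · exact hlt _ (by omega)

theorem exists_cubic_root_constantCoeff_eq_one {R : Type*} [CommRing R] (h2 : IsUnit (2 : R)) :
    ∃ v : R⟦X⟧, v ^ 3 + X ^ 3 * v ^ 2 - v - X ^ 5 = 0 ∧ constantCoeff v = 1 := by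
  set g : Polynomial R⟦X⟧ :=
    Polynomial.X ^ 3 + Polynomial.C (X ^ 3) * Polynomial.X ^ 2 - Polynomial.X
      - Polynomial.C (X ^ 5)
  have hmonic : g.Monic := by unfold g; monicity!
  have heval : g.eval 1 ∈ Ideal.span {X} := by
    refine Ideal.mem_span_singleton.2 ⟨X ^ 2 - X ^ 4, ?_⟩
    simp only [g, Polynomial.eval_sub, Polynomial.eval_add, Polynomial.eval_mul,
      Polynomial.eval_pow, Polynomial.eval_X, Polynomial.eval_C, one_pow, mul_one]
    ring
  have hderiv : g.derivative.eval 1 = 2 + 2 * X ^ 3 := by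
    simp only [g, Polynomial.derivative_sub, Polynomial.derivative_add, Polynomial.derivative_mul,
      Polynomial.derivative_C, Polynomial.derivative_X_pow, Polynomial.derivative_X,
      Polynomial.eval_sub, Polynomial.eval_add, Polynomial.eval_mul, Polynomial.eval_C,
      Polynomial.eval_pow, Polynomial.eval_X, Polynomial.eval_one]
    ring
  have hunit : IsUnit (2 + 2 * X ^ 3 : R⟦X⟧) := by
    rw [isUnit_iff_constantCoeff, map_add, map_mul, map_ofNat, map_pow, constantCoeff_X]
    simpa using h2
  obtain ⟨v, hv, hv1⟩ := HenselianRing.is_henselian g hmonic 1 heval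
    (hderiv ▸ hunit.map (Ideal.Quotient.mk (Ideal.span {X})))
  refine ⟨v, by simpa [g] using hv, ?_⟩
  obtain ⟨c, hc⟩ := Ideal.mem_span_singleton.1 hv1
  simpa [sub_eq_zero] using congrArg constantCoeff hc

theorem exists_quartic_branch {R : Type*} [CommRing R] [Nontrivial R]
    (h2 : IsUnit (2 : R)) :
    ∃ y : R⟦X⟧, y.order = 3 ∧ X ^ 6 * y - X ^ 2 * y ^ 3 + X ^ 6 - y ^ 2 = 0 := by
  obtain ⟨v, hv, hv1⟩ := exists_cubic_root_constantCoeff_eq_one h2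
  have hunit : IsUnit v := isUnit_iff_constantCoeff.mpr (by simp [hv1])
  set u : R⟦X⟧ := ↑hunit.unit⁻¹
  have huv : v * u = 1 := hunit.mul_val_inv
  have hu0 : constantCoeff u ≠ 0 :=
    (isUnit_iff_constantCoeff.mp (hunit.unit⁻¹).isUnit).ne_zero
  refine ⟨X ^ 3 * u, order_eq_nat.mpr ⟨by simpa [coeff_X_pow_mul'] using hu0, fun i hi => ?_⟩, ?_⟩
  · simp [coeff_X_pow_mul', hi.not_ge]
  · linear_combination X ^ 6 * (u ^ 3 * hv -
      (1 + v * u + (v * u) ^ 2 + X ^ 3 * u * (1 + v * u) - u ^ 2) * huv)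

end PowerSeries

/-- There is a real power series `y` of order `3` with `t⁶y − t²y³ + t⁶ − y² = 0`;
consequently `(x₁, x₂) = (t², y)` is a zero of `x₁³x₂ − x₁x₂³ + x₁³ − x₂²` over `ℝ((t))`
with `(−val x₁, −val x₂) = (−2, −3)`. -/
theorem quartic_branch_exists :
    ∃ y : PowerSeries ℝ, y.order = 3 ∧
      PowerSeries.X ^ 6 * y - PowerSeries.X ^ 2 * y ^ 3 + PowerSeries.X ^ 6 - y ^ 2 = 0 ∧
      (HahnSeries.ofPowerSeries ℤ ℝ PowerSeries.X ^ 2) ^ 3 *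
            HahnSeries.ofPowerSeries ℤ ℝ y -
          HahnSeries.ofPowerSeries ℤ ℝ PowerSeries.X ^ 2 *
            (HahnSeries.ofPowerSeries ℤ ℝ y) ^ 3 +
          (HahnSeries.ofPowerSeries ℤ ℝ PowerSeries.X ^ 2) ^ 3 -
          (HahnSeries.ofPowerSeries ℤ ℝ y) ^ 2 = 0 ∧
      (HahnSeries.ofPowerSeries ℤ ℝ PowerSeries.X ^ 2 : LaurentSeries ℝ).order = 2 ∧
      (HahnSeries.ofPowerSeries ℤ ℝ y : LaurentSeries ℝ).order = 3 := by
  obtain ⟨y, hy, hroot⟩ := PowerSeries.exists_quartic_branch (R := ℝ) (by norm_num)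
  have hroot' := congrArg (HahnSeries.ofPowerSeries ℤ ℝ) hroot
  simp only [map_sub, map_add, map_mul, map_pow, map_zero] at hroot'
  refine ⟨y, hy, hroot, by linear_combination hroot', ?_,
    PowerSeries.order_ofPowerSeries_of_order_eq hy⟩
  rw [← map_pow]
  exact PowerSeries.order_ofPowerSeries_of_order_eq (PowerSeries.order_X_pow 2)
end
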